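/- arXiv:1404.6550 — 9 statements merged into one kernel-verified Lean document; each statement's English description precedes it below -/
import Mathlib

section
/- If G is a graph and Q is a nonempty collection of maximum cliques in G (cliques of size ω(G)), then |⋃Q| + |⋂Q| ≥ 2ω(G), where ⋃Q and ⋂Q denote the union and intersection of all cliques in Q. -/
/-!
Let `U` and `I` be the union and the intersection of a nonempty family `Q` of cliques, and `B`
another clique. Every vertex of `U ∩ B` lies in some member of `Q`, which contains `I`, so
`(U ∩ B) ∪ (I \ B)` is a clique and `|U ∩ B| + |I \ B| ≤ ω`. By inclusion–exclusion, adding `B`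
to `Q` therefore raises `|U| + |I|` by at least `|B| - ω`, which is `0` when `B` is a maximum
clique; induction on `Q` starts from a single maximum clique, where `|U| + |I| = 2ω`.
-/

open Set

namespace SimpleGraph

variable {V : Type*} {G : SimpleGraph V}

lemma IsClique.ncard_le_cliqueNum [Finite V] {s : Set V} (hs : G.IsClique s) :
    s.ncard ≤ G.cliqueNum := by
  rw [ncard_eq_toFinset_card s]
  exact IsClique.card_le_cliqueNum (tc := by rwa [Finite.coe_toFinset])

lemma isClique_sUnion_inter_union_sInter_diff {Q : Set (Set V)} (hQne : Q.Nonempty)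
    (hQ : ∀ s ∈ Q, G.IsClique s) {B : Set V} (hB : G.IsClique B) :
    G.IsClique (⋃₀ Q ∩ B ∪ ⋂₀ Q \ B) := by
  intro x hx y hy hxy
  rcases hx with ⟨⟨A, hA, hxA⟩, hxB⟩ | ⟨hxI, -⟩ <;> rcases hy with ⟨⟨A', hA', hyA'⟩, hyB⟩ | ⟨hyI, -⟩
  · exact hB hxB hyB hxy
  · exact hQ A hA hxA (hyI A hA) hxy
  · exact hQ A' hA' (hxI A' hA') hyA' hxy
  · obtain ⟨A, hA⟩ := hQne
    exact hQ A hA (hxI A hA) (hyI A hA) hxy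

lemma ncard_add_ncard_sUnion_add_ncard_sInter_le [Finite V] {Q : Set (Set V)}
    (hQne : Q.Nonempty) (hQ : ∀ s ∈ Q, G.IsClique s) {B : Set V} (hB : G.IsClique B) :
    B.ncard + (⋃₀ Q).ncard + (⋂₀ Q).ncard ≤
      G.cliqueNum + (⋃₀ insert B Q).ncard + (⋂₀ insert B Q).ncard := by
  have hclique := (isClique_sUnion_inter_union_sInter_diff hQne hQ hB).ncard_le_cliqueNum
  rw [ncard_union_eq (disjoint_sdiff_right.mono_left inter_subset_right)] at hclique
  have hunion := ncard_union_add_ncard_inter (⋃₀ Q) B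
  have hinter := ncard_inter_add_ncard_sdiff_eq_ncard (⋂₀ Q) B
  rw [sUnion_insert, sInter_insert, union_comm, inter_comm]
  omega

theorem two_mul_cliqueNum_le_ncard_sUnion_add_ncard_sInter [Finite V] {Q : Set (Set V)}
    (hQne : Q.Nonempty) (hQ : ∀ s ∈ Q, G.IsClique s ∧ s.ncard = G.cliqueNum) :
    2 * G.cliqueNum ≤ (⋃₀ Q).ncard + (⋂₀ Q).ncard := by
  induction Q, Q.toFinite using Set.Finite.induction_on with
  | empty => exact absurd hQne not_nonempty_empty
  | @insert B Q _ _ ih =>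
    obtain ⟨hB, hBcard⟩ := hQ B (mem_insert B Q)
    rcases Q.eq_empty_or_nonempty with rfl | hQne'
    · simp only [insert_empty_eq, sUnion_singleton, sInter_singleton, hBcard]
      omega
    have hQ' s (hs : s ∈ Q) := hQ s (mem_insert_of_mem B hs)
    have hstep := ncard_add_ncard_sUnion_add_ncard_sInter_le hQne' (fun s hs ↦ (hQ' s hs).1) hB
    have := ih hQne' hQ'
    omega

end SimpleGraph

open SimpleGraph

/-- Hajnal's lemma: for a nonempty collection `Q` of maximum cliques of `G`,
`|⋃ Q| + |⋂ Q| ≥ 2ω(G)`. -/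
theorem hajnal_lemma {V : Type*} [Fintype V] (G : SimpleGraph V)
    (Q : Set (Finset V)) (hQne : Q.Nonempty)
    (hQ : ∀ s ∈ Q, G.IsNClique G.cliqueNum s) :
    2 * G.cliqueNum ≤ (⋃ s ∈ Q, (s : Set V)).ncard + (⋂ s ∈ Q, (s : Set V)).ncard := by
  rw [← sUnion_image, ← sInter_image]
  refine two_mul_cliqueNum_le_ncard_sUnion_add_ncard_sInter (hQne.image _) ?_
  rintro _ ⟨s, hs, rfl⟩
  exact ⟨(hQ s hs).isClique, by rw [ncard_coe_finset, (hQ s hs).card_eq]⟩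
end

section
/- Let G be a graph with ω(G) > (2/3)(Δ(G) + 1), and let Q be a collection of maximum cliques of G whose intersection graph X_Q is connected. Then the intersection ⋂Q of all cliques in Q is nonempty. -/
/-!
Grow a subfamily `P ⊆ Q` with a common vertex `v` one clique at a time. Since every clique of `P`
lies in the closed neighbourhood of `v`, `|⋃P| ≤ Δ + 1`, and Hajnal's inequality
`|⋂P| + |⋃P| ≥ 2ω` gives `|⋂P| ≥ 2ω - Δ - 1`. The same bound holds for `A ∩ B` when a new clique
`A` meets some `B ∈ P`. Both `⋂P` and `A ∩ B` lie in the `ω`-clique `B`, so they share at least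
`3ω - 2(Δ + 1) > 0` vertices, which are common to `A` and all of `P`. Connectivity of `X_Q` lets
this step reach every clique of `Q`.
-/

open SimpleGraph

/-- The intersection graph `X_Q` of a collection `Q` of cliques: vertices are the
cliques in `Q`, two distinct cliques being adjacent iff they intersect. -/
def interGraph {V : Type*} [DecidableEq V] (Q : Finset (Finset V)) :
    SimpleGraph {s // s ∈ Q} where
  Adj A B := A ≠ B ∧ ((A : Finset V) ∩ (B : Finset V)).Nonempty
  symm := by
    refine ⟨?_⟩
    rintro A B ⟨hne, h⟩
    exact ⟨hne.symm, by rwa [Finset.inter_comm]⟩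
  loopless := by refine ⟨?_⟩; rintro A ⟨hne, -⟩; exact hne rfl

namespace SimpleGraph

lemma Reachable.mem_of_adj_closed {W : Type*} {H : SimpleGraph W} {u w : W} {S : Set W}
    (hr : H.Reachable u w) (hS : ∀ a b, H.Adj a b → a ∈ S → b ∈ S) (hu : u ∈ S) : w ∈ S := by
  by_contra hw
  obtain ⟨d, -, hd₁, hd₂⟩ := hr.some.exists_boundary_dart S hu hw
  exact hd₂ (hS _ _ d.adj hd₁)

section Cliques

open Finset

variable {V : Type*} [DecidableEq V] (G : SimpleGraph V)

lemma isClique_inf'_union_inter_sup {Q : Finset (Finset V)} (hne : Q.Nonempty)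
    (hQ : ∀ s ∈ Q, G.IsClique (s : Set V)) {A : Finset V} (hA : G.IsClique (A : Set V)) :
    G.IsClique ((Q.inf' hne id ∪ (A ∩ Q.sup id) : Finset V) : Set V) := by
  obtain ⟨s₀, hs₀⟩ := hne
  rw [coe_union, IsClique, Set.pairwise_union]
  refine ⟨(hQ s₀ hs₀).subset (by exact_mod_cast inf'_le id hs₀),
    hA.subset (by exact_mod_cast inter_subset_left), ?_⟩
  intro a ha b hb hab
  obtain ⟨C, hC, hbC⟩ := mem_sup.1 (mem_inter.1 hb).2
  have hadj := hQ C hC (inf'_le id hC ha) hbC hab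
  exact ⟨hadj, hadj.symm⟩

/-- Hajnal's inequality. -/
lemma two_mul_cliqueNum_le_card_inf'_add_card_sup [Finite V] {Q : Finset (Finset V)}
    (hne : Q.Nonempty) (hQ : ∀ s ∈ Q, G.IsNClique G.cliqueNum s) :
    2 * G.cliqueNum ≤ #(Q.inf' hne id) + #(Q.sup id) := by
  induction hne using Nonempty.cons_induction with
  | singleton A => simp [(hQ A (mem_singleton_self A)).card_eq, two_mul]
  | cons A Q hAQ hne ih =>
    have hA := hQ A (mem_cons_self A Q)
    have hQ' : ∀ s ∈ Q, G.IsNClique G.cliqueNum s := fun s hs => hQ s (mem_cons_of_mem hs)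
    have ih := ih hQ'
    set D := Q.inf' hne id
    set U := Q.sup id
    have hclique : #(D ∪ (A ∩ U)) ≤ G.cliqueNum :=
      (G.isClique_inf'_union_inter_sup hne (fun s hs => (hQ' s hs).isClique)
        hA.isClique).card_le_cliqueNum
    have hDAU : #(D ∩ (A ∩ U)) ≤ #(A ∩ D) :=
      card_le_card fun x => by simp only [mem_inter]; tauto
    have e₁ := card_union_add_card_inter D (A ∩ U)
    have e₂ := card_inter_add_card_union A U
    rw [inf'_cons, sup_cons]
    change 2 * G.cliqueNum ≤ #(A ∩ D) + #(A ∪ U)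
    rw [hA.card_eq] at e₂
    omega

variable [Fintype V] [DecidableRel G.Adj]

lemma subset_insert_neighborFinset_of_isClique {s : Finset V} (hs : G.IsClique (s : Set V))
    {v : V} (hv : v ∈ s) : s ⊆ insert v (G.neighborFinset v) := by
  intro x hx
  rcases eq_or_ne x v with rfl | hxv
  · exact mem_insert_self _ _
  · exact mem_insert_of_mem ((G.mem_neighborFinset _ _).2 (hs hv hx hxv.symm))

lemma card_le_maxDegree_add_one_of_subset {s : Finset V} {v : V}
    (h : s ⊆ insert v (G.neighborFinset v)) : #s ≤ G.maxDegree + 1 :=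
  calc #s ≤ #(insert v (G.neighborFinset v)) := card_le_card h
    _ ≤ G.degree v + 1 := by rw [← G.card_neighborFinset_eq_degree]; exact card_insert_le _ _
    _ ≤ G.maxDegree + 1 := Nat.add_le_add_right (G.degree_le_maxDegree v) 1

lemma card_sup_le_maxDegree_add_one {Q : Finset (Finset V)}
    (hQ : ∀ s ∈ Q, G.IsClique (s : Set V)) {v : V} (hv : ∀ s ∈ Q, v ∈ s) :
    #(Q.sup id) ≤ G.maxDegree + 1 :=
  G.card_le_maxDegree_add_one_of_subset <|
    Finset.sup_le fun s hs => G.subset_insert_neighborFinset_of_isClique (hQ s hs) (hv s hs)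

lemma two_mul_cliqueNum_le_card_inf'_add_maxDegree {Q : Finset (Finset V)} (hne : Q.Nonempty)
    (hQ : ∀ s ∈ Q, G.IsNClique G.cliqueNum s) {v : V} (hv : ∀ s ∈ Q, v ∈ s) :
    2 * G.cliqueNum ≤ #(Q.inf' hne id) + G.maxDegree + 1 := by
  have := G.two_mul_cliqueNum_le_card_inf'_add_card_sup hne hQ
  have := G.card_sup_le_maxDegree_add_one (fun s hs => (hQ s hs).isClique) hv
  omega

lemma exists_forall_mem_insert_of_inter_nonempty
    (hω : 3 * G.cliqueNum > 2 * (G.maxDegree + 1)) {P : Finset (Finset V)}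
    (hP : ∀ s ∈ P, G.IsNClique G.cliqueNum s) {v : V} (hv : ∀ s ∈ P, v ∈ s) {A B : Finset V}
    (hA : G.IsNClique G.cliqueNum A) (hB : B ∈ P) (hAB : (A ∩ B).Nonempty) :
    ∃ x, ∀ s ∈ insert A P, x ∈ s := by
  have hPne : P.Nonempty := ⟨B, hB⟩
  have hD := G.two_mul_cliqueNum_le_card_inf'_add_maxDegree hPne hP hv
  set D := P.inf' hPne id
  obtain ⟨w, hw⟩ := hAB
  have hAB' : 2 * G.cliqueNum ≤ #(A ∩ B) + G.maxDegree + 1 := by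
    have hpair : ∀ s ∈ ({A, B} : Finset (Finset V)), G.IsNClique G.cliqueNum s := by
      simpa using ⟨hA, hP B hB⟩
    have hwpair : ∀ s ∈ ({A, B} : Finset (Finset V)), w ∈ s := by
      simpa using mem_inter.1 hw
    simpa using
      G.two_mul_cliqueNum_le_card_inf'_add_maxDegree (insert_nonempty A {B}) hpair hwpair
  have hunion : #(D ∪ (A ∩ B)) ≤ G.cliqueNum := by
    rw [← (hP B hB).card_eq]
    exact card_le_card (union_subset (inf'_le id hB) inter_subset_right)
  have := card_union_add_card_inter D (A ∩ B)
  obtain ⟨x, hx⟩ : (D ∩ (A ∩ B)).Nonempty := card_pos.1 (by omega)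
  refine ⟨x, fun s hs => ?_⟩
  rcases mem_insert.1 hs with rfl | hs
  · exact (mem_inter.1 (mem_inter.1 hx).2).1
  · exact inf'_le id hs (mem_inter.1 hx).1

end Cliques

end SimpleGraph

open Finset in
lemma exists_forall_mem_of_connected_interGraph {V : Type*} [DecidableEq V]
    {Q : Finset (Finset V)} (hconn : (interGraph Q).Connected) (hne : ∀ s ∈ Q, s.Nonempty)
    (hstep : ∀ P ⊆ Q, ∀ A ∈ Q, ∀ B ∈ P, (A ∩ B).Nonempty →
      (∃ x, ∀ s ∈ P, x ∈ s) → ∃ x, ∀ s ∈ insert A P, x ∈ s) :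
    ∃ x, ∀ s ∈ Q, x ∈ s := by
  classical
  let good := Q.powerset.filter fun P => ∃ x, ∀ s ∈ P, x ∈ s
  obtain ⟨r⟩ := hconn.nonempty
  obtain ⟨x, hx⟩ := hne r.1 r.2
  have hr : {r.1} ∈ good :=
    mem_filter.2 ⟨mem_powerset.2 (singleton_subset_iff.2 r.2), x, by simpa using hx⟩
  -- a largest subfamily with a common vertex is closed under adjacency in `interGraph Q`
  obtain ⟨P, hPgood, hPmax⟩ := exists_max_image good card ⟨_, hr⟩
  obtain ⟨hPQ, v, hv⟩ := mem_filter.1 hPgood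
  rw [mem_powerset] at hPQ
  obtain ⟨B₀, hB₀⟩ := card_pos.1 (by simpa using hPmax _ hr)
  have hclosed : ∀ B A : {s // s ∈ Q}, (interGraph Q).Adj B A → B.1 ∈ P → A.1 ∈ P := by
    intro B A hBA hB
    by_contra hA
    have hAgood : insert A.1 P ∈ good :=
      mem_filter.2 ⟨mem_powerset.2 (insert_subset A.2 hPQ),
        hstep P hPQ A.1 A.2 B.1 hB (by rw [inter_comm]; exact hBA.2) ⟨v, hv⟩⟩
    have := hPmax _ hAgood
    rw [card_insert_of_notMem hA] at this
    omega
  have hall (A : {s // s ∈ Q}) : A.1 ∈ P :=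
    (hconn.preconnected ⟨B₀, hPQ hB₀⟩ A).mem_of_adj_closed
      (S := {A : {s // s ∈ Q} | A.1 ∈ P}) hclosed hB₀
  exact ⟨v, fun s hs => hv s (hall ⟨s, hs⟩)⟩

/-- Kostochka's lemma: if `ω(G) > (2/3)(Δ(G)+1)` and `Q` is a collection of maximum
cliques of `G` whose intersection graph is connected, then `⋂ Q ≠ ∅`. -/
theorem kostochka_clique_graph {V : Type*} [Fintype V] [DecidableEq V]
    (G : SimpleGraph V) [DecidableRel G.Adj]
    (hω : 3 * G.cliqueNum > 2 * (G.maxDegree + 1))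
    (Q : Finset (Finset V)) (hQ : ∀ s ∈ Q, G.IsNClique G.cliqueNum s)
    (hconn : (interGraph Q).Connected) :
    (⋂ s ∈ Q, ((s : Finset V) : Set V)).Nonempty := by
  have hω₀ : 0 < G.cliqueNum := by omega
  obtain ⟨x, hx⟩ := exists_forall_mem_of_connected_interGraph hconn
    (fun s hs => Finset.card_pos.1 ((hQ s hs).card_eq ▸ hω₀))
    (fun P hPQ A hA B hB hAB ⟨v, hv⟩ => G.exists_forall_mem_insert_of_inter_nonempty hω
      (fun s hs => hQ s (hPQ hs)) hv (hQ A hA) hB hAB)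
  exact ⟨x, Set.mem_iInter₂.2 fun s hs => hx s hs⟩
end

section
/- Let G be a vertex-transitive graph and Q the collection of all maximum cliques in G. If ω(G) > (2/3)(Δ(G)+1), then the intersection graph X_Q is edgeless; that is, any two distinct maximum cliques of G are disjoint, so V(G) is partitioned into maximum cliques. -/
open SimpleGraph

/-- A graph is vertex-transitive if its automorphism group acts transitively
on the vertices. -/
def VertexTransitive {V : Type*} (G : SimpleGraph V) : Prop :=
  ∀ u v : V, ∃ e : G ≃g G, e u = v

open Finset in
/-- A set of vertices each equal or adjacent to a fixed vertex has size at most `Δ + 1`. -/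
lemma card_le_maxDegree_succ {V : Type*} [Fintype V] [DecidableEq V]
    (G : SimpleGraph V) [DecidableRel G.Adj] (A : Finset V) (v : V)
    (h : ∀ u ∈ A, u = v ∨ G.Adj v u) : A.card ≤ G.maxDegree + 1 := by
  have hsub : A ⊆ insert v (G.neighborFinset v) := by
    intro u hu
    rcases h u hu with rfl | hadj
    · exact mem_insert_self _ _
    · exact mem_insert_of_mem (by rwa [mem_neighborFinset])
  calc A.card ≤ (insert v (G.neighborFinset v)).card := card_le_card hsub
    _ ≤ (G.neighborFinset v).card + 1 := card_insert_le _ _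
    _ = G.degree v + 1 := by rw [G.card_neighborFinset_eq_degree]
    _ ≤ G.maxDegree + 1 := by
        have := G.degree_le_maxDegree v; omega

/-- Two maximum cliques sharing a vertex satisfy `2ω ≤ |s ∩ t| + Δ + 1`. -/
lemma inter_card_bound {V : Type*} [Fintype V] [DecidableEq V]
    (G : SimpleGraph V) [DecidableRel G.Adj]
    {s t : Finset V} (hs : G.IsNClique G.cliqueNum s) (ht : G.IsNClique G.cliqueNum t)
    {v : V} (hvs : v ∈ s) (hvt : v ∈ t) :
    2 * G.cliqueNum ≤ (s ∩ t).card + (G.maxDegree + 1) := by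
  have h1 : (s ∪ t).card ≤ G.maxDegree + 1 := by
    apply card_le_maxDegree_succ
    intro u hu
    rcases eq_or_ne u v with rfl | hne
    · exact Or.inl rfl
    · right
      rcases Finset.mem_union.1 hu with h | h
      · exact hs.isClique hvs h hne.symm
      · exact ht.isClique hvt h hne.symm
  have h2 := Finset.card_union_add_card_inter s t
  have h3 := hs.card_eq
  have h4 := ht.card_eq
  omega

/-- Images of maximum cliques under automorphisms are maximum cliques. -/
lemma isNClique_image {V : Type*} [DecidableEq V] {G : SimpleGraph V} (e : G ≃g G)
    {n : ℕ} {s : Finset V} (h : G.IsNClique n s) : G.IsNClique n (s.image e) := by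
  constructor
  · intro x hx y hy hxy
    simp only [Finset.coe_image, Set.mem_image, Finset.mem_coe] at hx hy
    obtain ⟨a, ha, rfl⟩ := hx
    obtain ⟨b, hb, rfl⟩ := hy
    have hab : a ≠ b := fun hh => hxy (by rw [hh])
    exact e.map_adj_iff.2 (h.isClique ha hb hab)
  · rw [Finset.card_image_of_injective _ (RelIso.injective e)]
    exact h.card_eq

open Finset in
/-- In a vertex-transitive graph, every vertex lies in the same number of maximum
cliques. -/
lemma count_cliques_const {V : Type*} [Fintype V] [DecidableEq V]
    (G : SimpleGraph V) [DecidableRel G.Adj] (hvt : VertexTransitive G) (u v : V)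
    (p : V → Finset V → Prop := fun w c => G.IsNClique G.cliqueNum c ∧ w ∈ c)
    [DecidablePred (p u)] [DecidablePred (p v)]
    (hp : ∀ w c, p w c ↔ G.IsNClique G.cliqueNum c ∧ w ∈ c) :
    (univ.filter (p u)).card = (univ.filter (p v)).card := by
  obtain ⟨e, he⟩ := hvt u v
  apply card_bij (fun c _ => c.image e)
  · intro c hc
    rw [mem_filter] at hc ⊢
    obtain ⟨-, hc⟩ := hc
    rw [hp] at hc
    refine ⟨mem_univ _, (hp v _).2 ⟨isNClique_image e hc.1, ?_⟩⟩
    rw [← he]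
    exact mem_image_of_mem _ hc.2
  · intro a _ b _ hab
    exact Finset.image_injective (RelIso.injective e) hab
  · intro d hd
    rw [mem_filter, hp] at hd
    refine ⟨d.image e.symm, ?_, ?_⟩
    · rw [mem_filter, hp]
      refine ⟨mem_univ _, isNClique_image e.symm hd.2.1, ?_⟩
      have : e.symm v = u := by rw [← he]; exact e.toEquiv.symm_apply_apply u
      rw [← this]
      exact mem_image_of_mem _ hd.2.2
    · ext x
      simp only [mem_image]
      constructor
      · rintro ⟨y, ⟨z, hz, rfl⟩, rfl⟩
        simpa using hz
      · intro hx
        exact ⟨e.symm x, ⟨x, hx, rfl⟩, e.toEquiv.apply_symm_apply x⟩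

open Finset in
/-- Hajnal-type lemma: a nonempty pairwise-intersecting family of maximum cliques in
a graph with `3ω > 2(Δ+1)` has nonempty total intersection (and satisfies the
Hajnal inequality). -/
lemma hajnal_core {V : Type*} [Fintype V] [DecidableEq V]
    (G : SimpleGraph V) [DecidableRel G.Adj]
    (hω : 3 * G.cliqueNum > 2 * (G.maxDegree + 1))
    (F : Finset (Finset V)) (hF : F.Nonempty) :
    (∀ c ∈ F, G.IsNClique G.cliqueNum c) →
    (∀ c ∈ F, ∀ d ∈ F, (c ∩ d).Nonempty) →
    (F.inf id).Nonempty ∧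
      2 * G.cliqueNum ≤ (F.inf id).card + (F.sup id).card := by
  induction hF using Finset.Nonempty.cons_induction with
  | singleton a =>
    intro hmem _
    have ha := hmem a (by simp)
    have hcard : a.card = G.cliqueNum := ha.card_eq
    constructor
    · simp only [inf_singleton, id]
      exact card_pos.1 (by omega)
    · simp only [inf_singleton, sup_singleton, id]
      omega
  | cons r F' hr hF' ih =>
    intro hmem hpair
    have hmem' : ∀ c ∈ F', G.IsNClique G.cliqueNum c := fun c hc =>
      hmem c (mem_cons_of_mem hc)
    have hpair' : ∀ c ∈ F', ∀ d ∈ F', (c ∩ d).Nonempty := fun c hc d hd =>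
      hpair c (mem_cons_of_mem hc) d (mem_cons_of_mem hd)
    obtain ⟨⟨v, hvI⟩, ihcard⟩ := ih hmem' hpair'
    set I' : Finset V := F'.inf id with hI'
    set U' : Finset V := F'.sup id with hU'
    obtain ⟨s', hs'⟩ := hF'
    have hI'sub : ∀ c ∈ F', I' ⊆ c := fun c hc => by
      have : F'.inf id ≤ id c := Finset.inf_le hc
      simpa using this
    have hUsub : ∀ c ∈ F', c ⊆ U' := fun c hc => by
      have : id c ≤ F'.sup id := Finset.le_sup hc
      simpa using this
    have hmemU : ∀ u ∈ U', ∃ c ∈ F', u ∈ c := by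
      intro u hu
      rw [hU', Finset.mem_sup] at hu
      exact hu
    have hrclique := hmem r (mem_cons_self _ _)
    -- |U'| ≤ Δ + 1
    have hUΔ : U'.card ≤ G.maxDegree + 1 := by
      apply card_le_maxDegree_succ
      intro u hu
      obtain ⟨c, hc, huc⟩ := hmemU u hu
      have hvc : v ∈ c := hI'sub c hc hvI
      rcases eq_or_ne u v with rfl | hne
      · exact Or.inl rfl
      · exact Or.inr ((hmem' c hc).isClique hvc huc hne.symm)
    -- I' ∪ (U' ∩ r) is a clique
    set B : Finset V := U' ∩ r with hB
    have hclq : G.IsClique (I' ∪ B : Finset V) := by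
      intro x hx y hy hxy
      simp only [Finset.coe_union, Set.mem_union, Finset.mem_coe, hB,
        Finset.mem_inter] at hx hy
      rcases hx with hx | ⟨hxU, hxr⟩ <;> rcases hy with hy | ⟨hyU, hyr⟩
      · exact (hmem' s' hs').isClique (hI'sub s' hs' hx) (hI'sub s' hs' hy) hxy
      · obtain ⟨c, hc, hyc⟩ := hmemU y hyU
        exact (hmem' c hc).isClique (hI'sub c hc hx) hyc hxy
      · obtain ⟨c, hc, hxc⟩ := hmemU x hxU
        exact (hmem' c hc).isClique hxc (hI'sub c hc hy) hxy
      · exact hrclique.isClique hxr hyr hxy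
    have hcard_le : (I' ∪ B).card ≤ G.cliqueNum :=
      SimpleGraph.IsClique.card_le_cliqueNum (tc := hclq)
    have hsplit : (I' ∪ B).card + (I' ∩ B).card = I'.card + B.card :=
      Finset.card_union_add_card_inter I' B
    have hI'U : I' ⊆ U' := (hI'sub s' hs').trans (hUsub s' hs')
    have hIB : I' ∩ B = I' ∩ r := by
      rw [hB, ← Finset.inter_assoc, Finset.inter_eq_left.mpr hI'U]
    -- r ∩ s' is big
    obtain ⟨w, hw⟩ := hpair r (mem_cons_self _ _) s' (mem_cons_of_mem hs')
    rw [Finset.mem_inter] at hw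
    have hrs' : 2 * G.cliqueNum ≤ (r ∩ s').card + (G.maxDegree + 1) :=
      inter_card_bound G hrclique (hmem' s' hs') hw.1 hw.2
    have hrs'B : (r ∩ s').card ≤ B.card := by
      apply card_le_card
      intro x hx
      rw [Finset.mem_inter] at hx
      rw [hB, Finset.mem_inter]
      exact ⟨hUsub s' hs' hx.2, hx.1⟩
    have hnew : (cons r F' hr).inf id = r ∩ I' := by
      rw [Finset.inf_cons]; rfl
    have hnews : (cons r F' hr).sup id = r ∪ U' := by
      rw [Finset.sup_cons]; rfl
    have hsplit2 : (r ∪ U').card + (r ∩ U').card = r.card + U'.card :=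
      Finset.card_union_add_card_inter r U'
    have hrI : (r ∩ I').card = (I' ∩ B).card := by rw [hIB, Finset.inter_comm]
    have hrU : (r ∩ U').card = B.card := by rw [hB, Finset.inter_comm]
    have hrcard : r.card = G.cliqueNum := hrclique.card_eq
    rw [hnew, hnews]
    constructor
    · apply card_pos.1
      omega
    · omega

/-- In a vertex-transitive graph with `ω > (2/3)(Δ+1)`, the intersection graph of
the maximum cliques is edgeless: distinct maximum cliques are disjoint, and every
vertex lies in a maximum clique, so the maximum cliques partition `V(G)`. -/
theorem transitive_max_cliques_disjoint {V : Type*} [Fintype V] [DecidableEq V]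
    (G : SimpleGraph V) [DecidableRel G.Adj]
    (hvt : VertexTransitive G)
    (hω : 3 * G.cliqueNum > 2 * (G.maxDegree + 1)) :
    (∀ s t : Finset V, G.IsNClique G.cliqueNum s → G.IsNClique G.cliqueNum t →
      s ≠ t → Disjoint s t) ∧
    (∀ v : V, ∃ s : Finset V, G.IsNClique G.cliqueNum s ∧ v ∈ s) := by
  classical
  have hω1 : 1 ≤ G.cliqueNum := by omega
  constructor
  · intro s t hs ht hne
    by_contra hdisj
    rw [Finset.not_disjoint_iff] at hdisj
    obtain ⟨v0, hv0s, hv0t⟩ := hdisj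
    set F : Finset (Finset V) :=
      Finset.univ.filter (fun c => G.IsNClique G.cliqueNum c ∧ (c ∩ s).Nonempty)
      with hFdef
    have hmemF : ∀ c, c ∈ F ↔ G.IsNClique G.cliqueNum c ∧ (c ∩ s).Nonempty := by
      intro c
      simp [hFdef]
    have hsne : s.Nonempty := Finset.card_pos.1 (by rw [hs.card_eq]; omega)
    have hsF : s ∈ F := (hmemF s).2 ⟨hs, by rwa [Finset.inter_self]⟩
    have htF : t ∈ F := (hmemF t).2 ⟨ht, ⟨v0, Finset.mem_inter.2 ⟨hv0t, hv0s⟩⟩⟩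
    have hmem : ∀ c ∈ F, G.IsNClique G.cliqueNum c := fun c hc => ((hmemF c).1 hc).1
    have hpair : ∀ c ∈ F, ∀ d ∈ F, (c ∩ d).Nonempty := by
      intro c hc d hd
      obtain ⟨hcq, x, hx⟩ := (hmemF c).1 hc
      obtain ⟨hdq, y, hy⟩ := (hmemF d).1 hd
      rw [Finset.mem_inter] at hx hy
      have hcs : 2 * G.cliqueNum ≤ (c ∩ s).card + (G.maxDegree + 1) :=
        inter_card_bound G hcq hs hx.1 hx.2
      have hds : 2 * G.cliqueNum ≤ (d ∩ s).card + (G.maxDegree + 1) :=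
        inter_card_bound G hdq hs hy.1 hy.2
      have hsub : (c ∩ s) ∪ (d ∩ s) ⊆ s := by
        intro z hz
        rcases Finset.mem_union.1 hz with h | h <;>
          exact (Finset.mem_inter.1 h).2
      have h1 : ((c ∩ s) ∪ (d ∩ s)).card ≤ G.cliqueNum := by
        calc ((c ∩ s) ∪ (d ∩ s)).card ≤ s.card := Finset.card_le_card hsub
          _ = G.cliqueNum := hs.card_eq
      have h2 := Finset.card_union_add_card_inter (c ∩ s) (d ∩ s)
      have h3 : (c ∩ s) ∩ (d ∩ s) ⊆ c ∩ d := by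
        intro z hz
        simp only [Finset.mem_inter] at hz ⊢
        exact ⟨hz.1.1, hz.2.1⟩
      have h4 := Finset.card_le_card h3
      rw [← Finset.card_pos]
      omega
    obtain ⟨⟨v, hvI⟩, -⟩ := hajnal_core G hω F ⟨s, hsF⟩ hmem hpair
    have hIc : ∀ c ∈ F, v ∈ c := by
      intro c hc
      have : F.inf id ≤ id c := Finset.inf_le hc
      exact this hvI
    have hvs : v ∈ s := hIc s hsF
    -- a vertex of s \ t
    have hst : (s \ t).Nonempty := by
      rw [Finset.sdiff_nonempty]
      intro hsub
      exact hne (Finset.eq_of_subset_of_card_le hsub (by rw [hs.card_eq, ht.card_eq]))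
    obtain ⟨u, hu⟩ := hst
    rw [Finset.mem_sdiff] at hu
    set Fv : Finset (Finset V) :=
      Finset.univ.filter (fun c => G.IsNClique G.cliqueNum c ∧ v ∈ c) with hFv
    set Fu : Finset (Finset V) :=
      Finset.univ.filter (fun c => G.IsNClique G.cliqueNum c ∧ u ∈ c) with hFu
    have hFveq : F = Fv := by
      ext c
      rw [hmemF c, hFv, Finset.mem_filter]
      constructor
      · rintro ⟨h1, h2⟩
        exact ⟨Finset.mem_univ _, h1, hIc c ((hmemF c).2 ⟨h1, h2⟩)⟩
      · rintro ⟨-, h1, h2⟩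
        exact ⟨h1, ⟨v, Finset.mem_inter.2 ⟨h2, hvs⟩⟩⟩
    have hFuF : Fu ⊆ F := by
      intro c hc
      rw [hFu, Finset.mem_filter] at hc
      exact (hmemF c).2 ⟨hc.2.1, ⟨u, Finset.mem_inter.2 ⟨hc.2.2, hu.1⟩⟩⟩
    have htFu : t ∉ Fu := by
      rw [hFu, Finset.mem_filter]
      rintro ⟨-, -, h⟩
      exact hu.2 h
    have hlt : Fu.card < Fv.card := by
      apply Finset.card_lt_card
      rw [Finset.ssubset_iff_of_subset (hFveq ▸ hFuF)]
      exact ⟨t, hFveq ▸ htF, htFu⟩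
    have heq : Fu.card = Fv.card := by
      rw [hFu, hFv]
      exact count_cliques_const G hvt u v _ (fun w c => Iff.rfl)
    omega
  · intro v
    obtain ⟨s0, hs0⟩ := G.exists_isNClique_cliqueNum
    have hs0ne : s0.Nonempty := Finset.card_pos.1 (by rw [hs0.card_eq]; omega)
    obtain ⟨w, hw⟩ := hs0ne
    obtain ⟨e, he⟩ := hvt w v
    exact ⟨s0.image e, isNClique_image e hs0, he ▸ Finset.mem_image_of_mem e hw⟩
end

section
/- Let H be a graph whose vertex set is partitioned into parts V_1, ..., V_r with |V_i| ≥ 2Δ(H) for every i. Then H has an independent set {v_1, ..., v_r} with v_i ∈ V_i for each i (an independent transversal). -/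
open SimpleGraph Finset

namespace HaxellAux

variable {V : Type*} [Fintype V] [DecidableEq V] (H : SimpleGraph V) [DecidableRel H.Adj]

/-- The set of vertices having a neighbour in `D`. -/
def Nb (D : Finset V) : Finset V := D.biUnion fun d => H.neighborFinset d

lemma mem_Nb {D : Finset V} {x : V} : x ∈ Nb H D ↔ ∃ d ∈ D, H.Adj d x := by
  simp [Nb, SimpleGraph.mem_neighborFinset]

lemma Nb_mono {D E : Finset V} (h : D ⊆ E) : Nb H D ⊆ Nb H E := by
  intro x hx
  rw [mem_Nb] at hx ⊢
  obtain ⟨d, hd, hadj⟩ := hx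
  exact ⟨d, h hd, hadj⟩

/-- `T` is an independent transversal of the family of classes `C`. -/
def IsIT (C : Finset (Finset V)) (T : Finset V) : Prop :=
  T ⊆ C.biUnion id ∧ (∀ c ∈ C, (T ∩ c).card = 1) ∧
    ∀ ⦃x⦄, x ∈ T → ∀ ⦃y⦄, y ∈ T → x ≠ y → ¬ H.Adj x y

/-- Evolution contract for partial transversals: new vertices avoid `D` and all its
neighbours, and no vertex of `D` is ever removed. -/
def Evol (D T T' : Finset V) : Prop :=
  (∀ v ∈ T', v ∉ T → v ∉ D ∧ v ∉ Nb H D) ∧ (∀ v ∈ T, v ∉ T' → v ∉ D)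

lemma Evol.refl (D T : Finset V) : Evol H D T T :=
  ⟨fun v hv hv' => absurd hv hv', fun v hv hv' => absurd hv hv'⟩

lemma Evol.trans {D T₁ T₂ T₃ : Finset V} (h : Evol H D T₁ T₂) (h' : Evol H D T₂ T₃) :
    Evol H D T₁ T₃ := by
  constructor
  · intro v hv3 hv1
    by_cases hv2 : v ∈ T₂
    · exact h.1 v hv2 hv1
    · exact h'.1 v hv3 hv2
  · intro v hv1 hv3
    by_cases hv2 : v ∈ T₂
    · exact h'.2 v hv2 hv3
    · exact h.2 v hv1 hv2

lemma Evol.mono {D E T T' : Finset V} (h : Evol H E T T') (hDE : D ⊆ E) : Evol H D T T' := by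
  constructor
  · intro v hv hv'
    obtain ⟨h1, h2⟩ := h.1 v hv hv'
    exact ⟨fun hc => h1 (hDE hc), fun hc => h2 (Nb_mono H hDE hc)⟩
  · intro v hv hv'
    exact fun hc => h.2 v hv hv' (hDE hc)

/-- Every vertex of `D` has a neighbour inside `D`. -/
def Pairy (D : Finset V) : Prop := ∀ x ∈ D, ∃ y ∈ D, H.Adj x y

/-- Every vertex of `S` has a neighbour in `E`. -/
def Dom (S E : Finset V) : Prop := ∀ x ∈ S, ∃ y ∈ E, H.Adj x y

/-- Success outcome of the engine: the transversal can be extended to the class `p`. -/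
abbrev EngA (C : Finset (Finset V)) (p D T : Finset V) : Prop :=
  ∃ T', IsIT H (insert p C) T' ∧ Evol H D T T'

/-- Failure outcome of the engine: a small dominating certificate. -/
abbrev EngB (C : Finset (Finset V)) (p D T : Finset V) : Prop :=
  ∃ (K : Finset (Finset V)) (D' T'' : Finset V),
    p ∈ K ∧ K ⊆ insert p C ∧ IsIT H C T'' ∧ Evol H D T T'' ∧
    D'.card + 2 ≤ 2 * K.card ∧
    Dom H D' (D ∪ D') ∧
    (∀ c ∈ K, Dom H c (D ∪ D')) ∧
    (∀ c ∈ K, c ≠ p → T'' ∩ c ⊆ D ∪ D') ∧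
    (∀ c ∈ K, c ≠ p → ∀ x ∈ T ∩ c, x ∉ D)

lemma rep_spec {C : Finset (Finset V)} {T : Finset V} (hT : IsIT H C T) {c : Finset V}
    (hc : c ∈ C) {x : V} (hx : x ∈ T ∩ c) : T ∩ c = {x} := by
  obtain ⟨a, ha⟩ := Finset.card_eq_one.mp (hT.2.1 c hc)
  rw [ha] at hx ⊢
  rw [Finset.mem_singleton] at hx
  rw [hx]

/-- The engine: either extend the independent transversal `T` of `C` to `insert p C`
(with the evolution contract relative to `D`), or produce a certificate. -/
lemma engine (Ps : Finset (Finset V))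
    (hdisj : ∀ a ∈ Ps, ∀ b ∈ Ps, a ≠ b → Disjoint a b) :
    ∀ (n : ℕ) (C : Finset (Finset V)), C.card ≤ n → C ⊆ Ps →
      ∀ p ∈ Ps, p ∉ C → ∀ D T : Finset V, IsIT H C T → Pairy H D →
      EngA H C p D T ∨ EngB H C p D T := by
  intro n
  induction n using Nat.strong_induction_on with
  | _ n IH =>
  intro C hCn hCPs p hpPs hpC D T hT hD
  -- a vertex of a class of `C` is not in `p`
  have hnotp : ∀ x : V, x ∈ C.biUnion id → x ∉ p := by
    intro x hx hxp
    obtain ⟨c, hc, hxc⟩ := Finset.mem_biUnion.mp hx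
    have hcp : c ≠ p := fun h => hpC (h ▸ hc)
    exact Finset.disjoint_left.mp (hdisj c (hCPs hc) p hpPs hcp) hxc hxp
  -- base return: all of `p` is dominated by the accumulated set
  have baseRet : ∀ (Dacc : Finset V) (Kacc : Finset (Finset V)) (T' : Finset V),
      D ⊆ Dacc → Kacc ⊆ C → (Dacc \ D).card ≤ 2 * Kacc.card → Pairy H Dacc →
      (∀ c ∈ Kacc, Dom H c Dacc) → (∀ c ∈ Kacc, T' ∩ c ⊆ Dacc) →
      (∀ c ∈ Kacc, ∀ x ∈ T ∩ c, x ∉ D) → IsIT H C T' → Evol H D T T' →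
      p ⊆ Dacc ∪ Nb H Dacc →
      EngA H C p D T ∨ EngB H C p D T := by
    intro Dacc Kacc T' hsub hKC hbud hpair hdom hclubs hsp hIT' hev hcov
    right
    have hu : D ∪ (Dacc \ D) = Dacc := Finset.union_sdiff_of_subset hsub
    have hpK : p ∉ Kacc := fun h => hpC (hKC h)
    refine ⟨insert p Kacc, Dacc \ D, T', Finset.mem_insert_self _ _,
      Finset.insert_subset_insert _ hKC, hIT', hev, ?_, ?_, ?_, ?_, ?_⟩
    · rw [Finset.card_insert_of_notMem hpK]
      omega
    · intro x hx
      rw [hu]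
      exact hpair x (Finset.mem_sdiff.mp hx).1
    · intro c hc x hx
      rw [hu]
      rcases Finset.mem_insert.mp hc with rfl | hc
      · rcases Finset.mem_union.mp (hcov hx) with h | h
        · exact hpair x h
        · obtain ⟨d, hd, hadj⟩ := (mem_Nb H).mp h
          exact ⟨d, hd, hadj.symm⟩
      · exact hdom c hc x hx
    · intro c hc hcp x hx
      rw [hu]
      rcases Finset.mem_insert.mp hc with rfl | hc
      · exact absurd rfl hcp
      · exact hclubs c hc hx
    · intro c hc hcp x hx
      rcases Finset.mem_insert.mp hc with rfl | hc
      · exact absurd rfl hcp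
      · exact hsp c hc x hx
  -- main loop on the undominated part of `p`
  have G : ∀ (m : ℕ) (Dacc : Finset V) (Kacc : Finset (Finset V)) (T' : Finset V),
      (p \ (Dacc ∪ Nb H Dacc)).card ≤ m →
      D ⊆ Dacc → Kacc ⊆ C → (Dacc \ D).card ≤ 2 * Kacc.card → Pairy H Dacc →
      (∀ c ∈ Kacc, Dom H c Dacc) → (∀ c ∈ Kacc, T' ∩ c ⊆ Dacc) →
      (∀ c ∈ Kacc, ∀ x ∈ T ∩ c, x ∉ D) → IsIT H C T' → Evol H D T T' →
      EngA H C p D T ∨ EngB H C p D T := by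
    intro m
    induction m with
    | zero =>
      intro Dacc Kacc T' hm hsub hKC hbud hpair hdom hclubs hsp hIT' hev
      refine baseRet Dacc Kacc T' hsub hKC hbud hpair hdom hclubs hsp hIT' hev ?_
      rw [← Finset.sdiff_eq_empty_iff_subset]
      exact Finset.card_eq_zero.mp (Nat.le_zero.mp hm)
    | succ m IHm =>
      intro Dacc Kacc T' hm hsub hKC hbud hpair hdom hclubs hsp hIT' hev
      by_cases hcov : p ⊆ Dacc ∪ Nb H Dacc
      · exact baseRet Dacc Kacc T' hsub hKC hbud hpair hdom hclubs hsp hIT' hev hcov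
      -- pick a candidate u
      obtain ⟨u, hup, hu⟩ := Finset.not_subset.mp hcov
      have huD : u ∉ Dacc := fun h => hu (Finset.mem_union_left _ h)
      have huNb : u ∉ Nb H Dacc := fun h => hu (Finset.mem_union_right _ h)
      have huDsmall : u ∉ D := fun h => huD (hsub h)
      have huNbD : u ∉ Nb H D := fun h => huNb (Nb_mono H hsub h)
      -- placing the candidate when it has no neighbour in the current transversal
      have place : ∀ T'' : Finset V, IsIT H C T'' → Evol H D T T'' →
          H.neighborFinset u ∩ T'' = ∅ → EngA H C p D T ∨ EngB H C p D T := by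
        intro T'' hIT'' hev'' hemp
        left
        have hadjT : ∀ x ∈ T'', ¬ H.Adj u x := by
          intro x hx hadj
          have : x ∈ H.neighborFinset u ∩ T'' :=
            Finset.mem_inter.mpr ⟨(SimpleGraph.mem_neighborFinset _ _ _).mpr hadj, hx⟩
          rw [hemp] at this
          exact absurd this (Finset.notMem_empty x)
        have huT'' : u ∉ T'' := fun h => hnotp u (hIT''.1 h) hup
        refine ⟨insert u T'', ⟨?_, ?_, ?_⟩, ?_⟩
        · intro x hx
          rcases Finset.mem_insert.mp hx with rfl | hx
          · exact Finset.mem_biUnion.mpr ⟨p, Finset.mem_insert_self _ _, hup⟩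
          · obtain ⟨c, hc, hxc⟩ := Finset.mem_biUnion.mp (hIT''.1 hx)
            exact Finset.mem_biUnion.mpr ⟨c, Finset.mem_insert_of_mem hc, hxc⟩
        · intro c hc
          rcases Finset.mem_insert.mp hc with rfl | hc
          · have hTp : T'' ∩ c = ∅ := by
              rw [Finset.eq_empty_iff_forall_notMem]
              intro x hx
              obtain ⟨hx1, hx2⟩ := Finset.mem_inter.mp hx
              exact hnotp x (hIT''.1 hx1) hx2
            rw [Finset.insert_inter_of_mem hup, hTp]
            simp
          · have hunotc : u ∉ c := by
              intro h
              exact hnotp u (Finset.mem_biUnion.mpr ⟨c, hc, h⟩) hup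
            rw [Finset.insert_inter_of_notMem hunotc]
            exact hIT''.2.1 c hc
        · intro x hx y hy hxy hadj
          rcases Finset.mem_insert.mp hx with hx1 | hx1
          · rcases Finset.mem_insert.mp hy with hy1 | hy1
            · exact hxy (hx1.trans hy1.symm)
            · exact hadjT y hy1 (hx1 ▸ hadj)
          · rcases Finset.mem_insert.mp hy with hy1 | hy1
            · exact hadjT x hx1 (hy1 ▸ hadj).symm
            · exact hIT''.2.2 hx1 hy1 hxy hadj
        · refine (Evol.trans H hev'' ?_)
          constructor
          · intro v hv hv'
            rcases Finset.mem_insert.mp hv with rfl | hv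
            · exact ⟨huDsmall, huNbD⟩
            · exact absurd hv hv'
          · intro v hv hv'
            exact absurd (Finset.mem_insert_of_mem hv) hv'
      -- the blocker loop
      have Hloop : ∀ (k : ℕ) (T' : Finset V),
          (H.neighborFinset u ∩ T').card ≤ k →
          (∀ c ∈ Kacc, T' ∩ c ⊆ Dacc) → IsIT H C T' → Evol H D T T' →
          (EngA H C p D T ∨ EngB H C p D T) ∨
          (∃ (Dacc2 : Finset V) (Kacc2 : Finset (Finset V)) (T2 : Finset V),
            D ⊆ Dacc2 ∧ Kacc2 ⊆ C ∧ (Dacc2 \ D).card ≤ 2 * Kacc2.card ∧ Pairy H Dacc2 ∧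
            (∀ c ∈ Kacc2, Dom H c Dacc2) ∧ (∀ c ∈ Kacc2, T2 ∩ c ⊆ Dacc2) ∧
            (∀ c ∈ Kacc2, ∀ x ∈ T ∩ c, x ∉ D) ∧ IsIT H C T2 ∧ Evol H D T T2 ∧
            Dacc ⊆ Dacc2 ∧ u ∈ Dacc2) := by
        intro k
        induction k with
        | zero =>
          intro T' hk hclubs' hIT' hev'
          left
          exact place T' hIT' hev' (Finset.card_eq_zero.mp (Nat.le_zero.mp hk))
        | succ k IHk =>
          intro T' hk hclubs' hIT' hev'
          rcases Finset.eq_empty_or_nonempty (H.neighborFinset u ∩ T') with hemp | ⟨b, hb⟩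
          · exact Or.inl (place T' hIT' hev' hemp)
          obtain ⟨hb1, hbT'⟩ := Finset.mem_inter.mp hb
          have hadjub : H.Adj u b := (SimpleGraph.mem_neighborFinset _ _ _).mp hb1
          have hbDacc : b ∉ Dacc := by
            intro h
            exact huNb ((mem_Nb H).mpr ⟨b, h, hadjub.symm⟩)
          obtain ⟨cb, hcbC, hbcb⟩ := Finset.mem_biUnion.mp (hIT'.1 hbT')
          simp only [id_eq] at hbcb
          have hrepb : T' ∩ cb = {b} :=
            rep_spec H hIT' hcbC (Finset.mem_inter.mpr ⟨hbT', hbcb⟩)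
          -- set up the recursive call
          set Dsub := insert u (insert b Dacc) with hDsub
          set Tsub := T'.erase b with hTsub
          set Csub := C.erase cb with hCsub
          have hDaccDsub : Dacc ⊆ Dsub := by
            intro x hx
            exact Finset.mem_insert_of_mem (Finset.mem_insert_of_mem hx)
          have hbmemDsub : b ∈ Dsub := Finset.mem_insert_of_mem (Finset.mem_insert_self _ _)
          have humemDsub : u ∈ Dsub := Finset.mem_insert_self _ _
          have hDDsub : D ⊆ Dsub := hsub.trans hDaccDsub
          -- a vertex of a class different from cb is not in cb
          have hnotcb : ∀ c ∈ C, c ≠ cb → ∀ x ∈ c, x ∉ cb := by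
            intro c hc hccb x hxc hxcb
            exact Finset.disjoint_left.mp (hdisj c (hCPs hc) cb (hCPs hcbC) hccb) hxc hxcb
          have hITsub : IsIT H Csub Tsub := by
            refine ⟨?_, ?_, ?_⟩
            · intro x hx
              have hxT' : x ∈ T' := Finset.mem_of_mem_erase hx
              have hxb : x ≠ b := Finset.ne_of_mem_erase hx
              obtain ⟨c, hc, hxc⟩ := Finset.mem_biUnion.mp (hIT'.1 hxT')
              have hccb : c ≠ cb := by
                intro h
                subst h
                have : x ∈ T' ∩ c := Finset.mem_inter.mpr ⟨hxT', hxc⟩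
                rw [hrepb] at this
                exact hxb (Finset.mem_singleton.mp this)
              exact Finset.mem_biUnion.mpr ⟨c, Finset.mem_erase.mpr ⟨hccb, hc⟩, hxc⟩
            · intro c hc
              obtain ⟨hccb, hcC⟩ := Finset.mem_erase.mp hc
              have : Tsub ∩ c = T' ∩ c := by
                ext x
                simp only [hTsub, Finset.mem_inter, Finset.mem_erase]
                constructor
                · rintro ⟨⟨_, hx⟩, hxc⟩
                  exact ⟨hx, hxc⟩
                · rintro ⟨hx, hxc⟩
                  refine ⟨⟨?_, hx⟩, hxc⟩
                  intro h
                  subst h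
                  exact hnotcb c hcC hccb x hxc hbcb
              rw [this]
              exact hIT'.2.1 c hcC
            · intro x hx y hy hxy
              exact hIT'.2.2 (Finset.mem_of_mem_erase hx) (Finset.mem_of_mem_erase hy) hxy
          have hPsub : Pairy H Dsub := by
            intro x hx
            rcases Finset.mem_insert.mp hx with rfl | hx
            · exact ⟨b, hbmemDsub, hadjub⟩
            rcases Finset.mem_insert.mp hx with rfl | hx
            · exact ⟨u, humemDsub, hadjub.symm⟩
            · obtain ⟨y, hy, hadj⟩ := hpair x hx
              exact ⟨y, hDaccDsub hy, hadj⟩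
          have hcardlt : Csub.card < n :=
            lt_of_lt_of_le (Finset.card_erase_lt_of_mem hcbC) hCn
          have hCsubPs : Csub ⊆ Ps := (Finset.erase_subset _ _).trans hCPs
          have hcbnot : cb ∉ Csub := Finset.notMem_erase _ _
          -- the recursive call
          rcases IH Csub.card hcardlt Csub le_rfl hCsubPs cb (hCPs hcbC) hcbnot Dsub Tsub
              hITsub hPsub with ⟨T₁, hIT₁, hev₁⟩ | ⟨K₁, D₁, T₁, hcbK₁, hK₁sub, hIT₁, hev₁,
              hbud₁, hdomD₁, hcls₁, hclubs₁, hsp₁⟩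
          -- success of the recursive call: one fewer blocker
          · rw [Finset.insert_erase hcbC] at hIT₁
            have hevTT₁ : Evol H D T T₁ := by
              refine Evol.trans H hev' (Evol.trans H ?_ (Evol.mono H hev₁ hDDsub))
              constructor
              · intro v hv hv'
                exact absurd (Finset.mem_of_mem_erase hv) hv'
              · intro v hv hv'
                have : v = b := by
                  by_contra hne
                  exact hv' (Finset.mem_erase.mpr ⟨hne, hv⟩)
                subst this
                exact fun h => hbDacc (hsub h)
            have hclubs₁' : ∀ c ∈ Kacc, T₁ ∩ c ⊆ Dacc := by
              intro c hc x hx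
              have hcC : c ∈ C := hKC hc
              obtain ⟨r, hr⟩ := Finset.card_eq_one.mp (hIT'.2.1 c hcC)
              have hrT' : r ∈ T' ∩ c := by rw [hr]; exact Finset.mem_singleton_self r
              have hrDacc : r ∈ Dacc := hclubs' c hc hrT'
              have hrb : r ≠ b := fun h => hbDacc (h ▸ hrDacc)
              have hrTsub : r ∈ Tsub :=
                Finset.mem_erase.mpr ⟨hrb, (Finset.mem_inter.mp hrT').1⟩
              have hrT₁ : r ∈ T₁ := by
                by_contra hcon
                exact (hev₁.2 r hrTsub hcon) (hDaccDsub hrDacc)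
              have : T₁ ∩ c = {r} :=
                rep_spec H hIT₁ hcC
                  (Finset.mem_inter.mpr ⟨hrT₁, (Finset.mem_inter.mp hrT').2⟩)
              rw [this] at hx
              rw [Finset.mem_singleton.mp hx]
              exact hrDacc
            have hmeas : (H.neighborFinset u ∩ T₁).card ≤ k := by
              have hss : H.neighborFinset u ∩ T₁ ⊆ (H.neighborFinset u ∩ T').erase b := by
                intro x hx
                obtain ⟨hx1, hx2⟩ := Finset.mem_inter.mp hx
                have hadjux : H.Adj u x := (SimpleGraph.mem_neighborFinset _ _ _).mp hx1
                have hxTsub : x ∈ Tsub := by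
                  by_contra hcon
                  have := (hev₁.1 x hx2 hcon).2
                  exact this ((mem_Nb H).mpr ⟨u, humemDsub, hadjux⟩)
                exact Finset.mem_erase.mpr ⟨Finset.ne_of_mem_erase hxTsub,
                  Finset.mem_inter.mpr ⟨hx1, Finset.mem_of_mem_erase hxTsub⟩⟩
              calc (H.neighborFinset u ∩ T₁).card ≤ ((H.neighborFinset u ∩ T').erase b).card :=
                    Finset.card_le_card hss
                _ = (H.neighborFinset u ∩ T').card - 1 := Finset.card_erase_of_mem hb
                _ ≤ k := by omega
            exact IHk T₁ hmeas hclubs₁' hIT₁ hevTT₁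
          -- failure of the recursive call: enlarge the certificate
          · rw [Finset.insert_erase hcbC] at hK₁sub
            set Tnext := insert b T₁ with hTnext
            have hT₁cb : T₁ ∩ cb = ∅ := by
              rw [Finset.eq_empty_iff_forall_notMem]
              intro x hx
              obtain ⟨hx1, hx2⟩ := Finset.mem_inter.mp hx
              obtain ⟨c, hc, hxc⟩ := Finset.mem_biUnion.mp (hIT₁.1 hx1)
              obtain ⟨hccb, hcC⟩ := Finset.mem_erase.mp hc
              exact hnotcb c hcC hccb x hxc hx2
            have hbT₁ : b ∉ T₁ := by
              intro h
              have : b ∈ T₁ ∩ cb := Finset.mem_inter.mpr ⟨h, hbcb⟩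
              rw [hT₁cb] at this
              exact absurd this (Finset.notMem_empty b)
            -- independence of b towards T₁
            have hbind : ∀ x ∈ T₁, ¬ H.Adj b x := by
              intro x hx hadj
              by_cases hxTsub : x ∈ Tsub
              · have hxT' : x ∈ T' := Finset.mem_of_mem_erase hxTsub
                have hxb : x ≠ b := Finset.ne_of_mem_erase hxTsub
                exact hIT'.2.2 hbT' hxT' (Ne.symm hxb) hadj
              · have := (hev₁.1 x hx hxTsub).2
                exact this ((mem_Nb H).mpr ⟨b, hbmemDsub, hadj⟩)
            have hITnext : IsIT H C Tnext := by
              refine ⟨?_, ?_, ?_⟩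
              · intro x hx
                rcases Finset.mem_insert.mp hx with rfl | hx
                · exact Finset.mem_biUnion.mpr ⟨cb, hcbC, hbcb⟩
                · obtain ⟨c, hc, hxc⟩ := Finset.mem_biUnion.mp (hIT₁.1 hx)
                  exact Finset.mem_biUnion.mpr ⟨c, Finset.mem_of_mem_erase hc, hxc⟩
              · intro c hc
                by_cases hccb : c = cb
                · subst hccb
                  rw [hTnext, Finset.insert_inter_of_mem hbcb, hT₁cb]
                  simp
                · have hbnotc : b ∉ c := by
                    intro h
                    exact hnotcb c hc hccb b h hbcb
                  rw [hTnext, Finset.insert_inter_of_notMem hbnotc]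
                  exact hIT₁.2.1 c (Finset.mem_erase.mpr ⟨hccb, hc⟩)
              · intro x hx y hy hxy hadj
                rw [hTnext] at hx hy
                rcases Finset.mem_insert.mp hx with hx1 | hx1
                · rcases Finset.mem_insert.mp hy with hy1 | hy1
                  · exact hxy (hx1.trans hy1.symm)
                  · exact hbind y hy1 (hx1 ▸ hadj)
                · rcases Finset.mem_insert.mp hy with hy1 | hy1
                  · exact hbind x hx1 (hy1 ▸ hadj).symm
                  · exact hIT₁.2.2 hx1 hy1 hxy hadj
            -- the new accumulated state
            set Dacc2 := Dsub ∪ D₁ with hDacc2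
            set Kacc2 := Kacc ∪ K₁ with hKacc2
            have hK₁C : K₁ ⊆ C := hK₁sub
            have hDaccDacc2 : Dacc ⊆ Dacc2 :=
              hDaccDsub.trans Finset.subset_union_left
            have hDsubDacc2 : Dsub ⊆ Dacc2 := Finset.subset_union_left
            -- disjointness of Kacc and K₁
            have hdisjK : ∀ c ∈ Kacc, c ∉ K₁ := by
              intro c hc hcK₁
              by_cases hccb : c = cb
              · subst hccb
                have : b ∈ Dacc := hclubs' c hc (by rw [hrepb]; exact Finset.mem_singleton_self b)
                exact hbDacc this
              · have hcC : c ∈ C := hKC hc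
                obtain ⟨r, hr⟩ := Finset.card_eq_one.mp (hIT'.2.1 c hcC)
                have hrT' : r ∈ T' ∩ c := by rw [hr]; exact Finset.mem_singleton_self r
                have hrDacc : r ∈ Dacc := hclubs' c hc hrT'
                have hrb : r ≠ b := fun h => hbDacc (h ▸ hrDacc)
                have hrTsub : r ∈ Tsub ∩ c :=
                  Finset.mem_inter.mpr ⟨Finset.mem_erase.mpr ⟨hrb, (Finset.mem_inter.mp hrT').1⟩,
                    (Finset.mem_inter.mp hrT').2⟩
                exact hsp₁ c hcK₁ hccb r hrTsub (hDaccDsub hrDacc)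
            have hdisjKK : Disjoint Kacc K₁ := Finset.disjoint_left.mpr hdisjK
            -- budget
            have hbud2 : (Dacc2 \ D).card ≤ 2 * Kacc2.card := by
              have hss : Dacc2 \ D ⊆ insert u (insert b ((Dacc \ D) ∪ D₁)) := by
                intro x hx
                obtain ⟨hx1, hx2⟩ := Finset.mem_sdiff.mp hx
                rcases Finset.mem_union.mp hx1 with hx1 | hx1
                · rcases Finset.mem_insert.mp hx1 with rfl | hx1
                  · exact Finset.mem_insert_self _ _
                  rcases Finset.mem_insert.mp hx1 with rfl | hx1
                  · exact Finset.mem_insert_of_mem (Finset.mem_insert_self _ _)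
                  · exact Finset.mem_insert_of_mem (Finset.mem_insert_of_mem
                      (Finset.mem_union_left _ (Finset.mem_sdiff.mpr ⟨hx1, hx2⟩)))
                · exact Finset.mem_insert_of_mem (Finset.mem_insert_of_mem
                    (Finset.mem_union_right _ hx1))
              have h1 : (Dacc2 \ D).card ≤ (Dacc \ D).card + D₁.card + 2 := by
                calc (Dacc2 \ D).card ≤ (insert u (insert b ((Dacc \ D) ∪ D₁))).card :=
                      Finset.card_le_card hss
                  _ ≤ (insert b ((Dacc \ D) ∪ D₁)).card + 1 := Finset.card_insert_le _ _
                  _ ≤ ((Dacc \ D) ∪ D₁).card + 1 + 1 := by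
                      have := Finset.card_insert_le b ((Dacc \ D) ∪ D₁)
                      omega
                  _ ≤ (Dacc \ D).card + D₁.card + 2 := by
                      have := Finset.card_union_le (Dacc \ D) D₁
                      omega
              have h2 : Kacc2.card = Kacc.card + K₁.card :=
                Finset.card_union_of_disjoint hdisjKK
              omega
            -- pairy
            have hpair2 : Pairy H Dacc2 := by
              intro x hx
              rcases Finset.mem_union.mp hx with hx | hx
              · rcases Finset.mem_insert.mp hx with rfl | hx
                · exact ⟨b, hDsubDacc2 hbmemDsub, hadjub⟩
                rcases Finset.mem_insert.mp hx with rfl | hx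
                · exact ⟨u, hDsubDacc2 humemDsub, hadjub.symm⟩
                · obtain ⟨y, hy, hadj⟩ := hpair x hx
                  exact ⟨y, hDaccDacc2 hy, hadj⟩
              · obtain ⟨y, hy, hadj⟩ := hdomD₁ x hx
                rcases Finset.mem_union.mp hy with hy | hy
                · exact ⟨y, hDsubDacc2 hy, hadj⟩
                · exact ⟨y, Finset.mem_union_right _ hy, hadj⟩
            -- domination of the classes
            have hdom2 : ∀ c ∈ Kacc2, Dom H c Dacc2 := by
              intro c hc x hx
              rcases Finset.mem_union.mp hc with hc | hc
              · obtain ⟨y, hy, hadj⟩ := hdom c hc x hx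
                exact ⟨y, hDaccDacc2 hy, hadj⟩
              · obtain ⟨y, hy, hadj⟩ := hcls₁ c hc x hx
                rcases Finset.mem_union.mp hy with hy | hy
                · exact ⟨y, hDsubDacc2 hy, hadj⟩
                · exact ⟨y, Finset.mem_union_right _ hy, hadj⟩
            -- clubs for the new state
            have hclubs2 : ∀ c ∈ Kacc2, Tnext ∩ c ⊆ Dacc2 := by
              intro c hc x hx
              obtain ⟨hx1, hx2⟩ := Finset.mem_inter.mp hx
              rcases Finset.mem_union.mp hc with hc | hc
              · -- c ∈ Kacc : the old representative survives
                have hcC : c ∈ C := hKC hc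
                have hccb : c ≠ cb := by
                  intro h
                  exact hdisjK c hc (h ▸ hcbK₁)
                obtain ⟨r, hr⟩ := Finset.card_eq_one.mp (hIT'.2.1 c hcC)
                have hrT' : r ∈ T' ∩ c := by rw [hr]; exact Finset.mem_singleton_self r
                have hrDacc : r ∈ Dacc := hclubs' c hc hrT'
                have hrb : r ≠ b := fun h => hbDacc (h ▸ hrDacc)
                have hrTsub : r ∈ Tsub :=
                  Finset.mem_erase.mpr ⟨hrb, (Finset.mem_inter.mp hrT').1⟩
                have hrT₁ : r ∈ T₁ := by
                  by_contra hcon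
                  exact (hev₁.2 r hrTsub hcon) (hDaccDsub hrDacc)
                have hrTnext : r ∈ Tnext := Finset.mem_insert_of_mem hrT₁
                have : Tnext ∩ c = {r} :=
                  rep_spec H hITnext hcC
                    (Finset.mem_inter.mpr ⟨hrTnext, (Finset.mem_inter.mp hrT').2⟩)
                have hxr : x ∈ ({r} : Finset V) := by
                  rw [← this]; exact hx
                rw [Finset.mem_singleton.mp hxr]
                exact hDaccDacc2 hrDacc
              · by_cases hccb : c = cb
                · subst hccb
                  rw [hTnext] at hx1
                  rcases Finset.mem_insert.mp hx1 with hx3 | hx3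
                  · exact hx3.symm ▸ hDsubDacc2 hbmemDsub
                  · have : x ∈ T₁ ∩ c := Finset.mem_inter.mpr ⟨hx3, hx2⟩
                    rw [hT₁cb] at this
                    exact absurd this (Finset.notMem_empty x)
                · have hxT₁ : x ∈ T₁ := by
                    rw [hTnext] at hx1
                    rcases Finset.mem_insert.mp hx1 with hx3 | hx3
                    · exact absurd hbcb (hx3 ▸ hnotcb c (hK₁C hc) hccb x hx2)
                    · exact hx3
                  have := hclubs₁ c hc hccb (Finset.mem_inter.mpr ⟨hxT₁, hx2⟩)
                  rcases Finset.mem_union.mp this with h | h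
                  · exact hDsubDacc2 h
                  · exact Finset.mem_union_right _ h
            -- spades for the new state
            have hsp2 : ∀ c ∈ Kacc2, ∀ x ∈ T ∩ c, x ∉ D := by
              intro c hc x hx hxD
              obtain ⟨hx1, hx2⟩ := Finset.mem_inter.mp hx
              rcases Finset.mem_union.mp hc with hc | hc
              · exact hsp c hc x hx hxD
              · have hxDacc : x ∈ Dacc := hsub hxD
                have hxT' : x ∈ T' := by
                  by_contra hcon
                  exact (hev'.2 x hx1 hcon) hxD
                by_cases hccb : c = cb
                · subst hccb
                  have : x ∈ T' ∩ c := Finset.mem_inter.mpr ⟨hxT', hx2⟩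
                  rw [hrepb] at this
                  exact hbDacc ((Finset.mem_singleton.mp this) ▸ hxDacc)
                · have hxb : x ≠ b := fun h => hbDacc (h ▸ hxDacc)
                  have hxTsub : x ∈ Tsub ∩ c :=
                    Finset.mem_inter.mpr ⟨Finset.mem_erase.mpr ⟨hxb, hxT'⟩, hx2⟩
                  exact hsp₁ c hc hccb x hxTsub (hDaccDsub hxDacc)
            -- evolution to Tnext
            have hevnext : Evol H D T Tnext := by
              refine Evol.trans H hev' ?_
              constructor
              · intro v hv hv'
                rcases Finset.mem_insert.mp hv with rfl | hv
                · exact absurd hbT' hv'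
                · by_cases hvTsub : v ∈ Tsub
                  · exact absurd (Finset.mem_of_mem_erase hvTsub) hv'
                  · obtain ⟨h1, h2⟩ := hev₁.1 v hv hvTsub
                    exact ⟨fun hc => h1 (hDDsub hc), fun hc => h2 (Nb_mono H hDDsub hc)⟩
              · intro v hv hv'
                have hvb : v ≠ b := by
                  intro h
                  exact hv' (h ▸ Finset.mem_insert_self b T₁)
                have hvTsub : v ∈ Tsub := Finset.mem_erase.mpr ⟨hvb, hv⟩
                have hvT₁ : v ∉ T₁ := fun h => hv' (Finset.mem_insert_of_mem h)
                exact fun hc => (hev₁.2 v hvTsub hvT₁) (hDDsub hc)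
            -- return the improved state
            right
            refine ⟨Dacc2, Kacc2, Tnext, hsub.trans hDaccDacc2, ?_, hbud2, hpair2, hdom2,
              hclubs2, hsp2, hITnext, hevnext, hDaccDacc2, hDsubDacc2 humemDsub⟩
            exact Finset.union_subset hKC hK₁C
      -- run the blocker loop
      rcases Hloop (H.neighborFinset u ∩ T').card T' le_rfl hclubs hIT' hev with
        hgoal | ⟨Dacc2, Kacc2, T2, hsub2, hKC2, hbud2, hpair2, hdom2, hclubs2, hsp2, hIT2,
          hev2, hDD2, huD2⟩
      · exact hgoal
      · refine IHm Dacc2 Kacc2 T2 ?_ hsub2 hKC2 hbud2 hpair2 hdom2 hclubs2 hsp2 hIT2 hev2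
        have hss : p \ (Dacc2 ∪ Nb H Dacc2) ⊆ (p \ (Dacc ∪ Nb H Dacc)).erase u := by
          intro x hx
          obtain ⟨hx1, hx2⟩ := Finset.mem_sdiff.mp hx
          have hxu : x ≠ u := by
            intro h
            exact hx2 (Finset.mem_union_left _ (h ▸ huD2))
          refine Finset.mem_erase.mpr ⟨hxu, Finset.mem_sdiff.mpr ⟨hx1, ?_⟩⟩
          intro hcon
          rcases Finset.mem_union.mp hcon with h | h
          · exact hx2 (Finset.mem_union_left _ (hDD2 h))
          · exact hx2 (Finset.mem_union_right _ (Nb_mono H hDD2 h))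
        have humem : u ∈ p \ (Dacc ∪ Nb H Dacc) := Finset.mem_sdiff.mpr ⟨hup, hu⟩
        calc (p \ (Dacc2 ∪ Nb H Dacc2)).card
            ≤ ((p \ (Dacc ∪ Nb H Dacc)).erase u).card := Finset.card_le_card hss
          _ = (p \ (Dacc ∪ Nb H Dacc)).card - 1 := Finset.card_erase_of_mem humem
          _ ≤ m := by omega
  exact G (p \ (D ∪ Nb H D)).card D ∅ T le_rfl le_rfl (Finset.empty_subset _)
    (by simp) hD (by simp) (by simp) (by simp) hT (Evol.refl H D T)

end HaxellAux

open HaxellAux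

/-- Haxell's theorem: if the vertices of a graph `H` are partitioned into parts each
of size at least `2Δ(H)`, then `H` has an independent transversal, i.e. an
independent set containing one vertex from each part. -/
theorem haxell_independent_transversal {V : Type*} [Fintype V] [DecidableEq V]
    (H : SimpleGraph V) [DecidableRel H.Adj]
    (P : Finpartition (Finset.univ : Finset V))
    (hP : ∀ p ∈ P.parts, 2 * H.maxDegree ≤ p.card) :
    ∃ f : P.parts → V, (∀ p : P.parts, f p ∈ (p : Finset V)) ∧
      ∀ p q : P.parts, p ≠ q → ¬ H.Adj (f p) (f q) := by
  classical
  have hdisj : ∀ a ∈ P.parts, ∀ b ∈ P.parts, a ≠ b → Disjoint a b := by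
    intro a ha b hb hab
    exact P.supIndep.pairwiseDisjoint ha hb hab
  -- every subfamily of the parts admits an independent transversal
  have allIT : ∀ (n : ℕ) (C : Finset (Finset V)), C.card ≤ n → C ⊆ P.parts →
      ∃ T, IsIT H C T := by
    intro n
    induction n with
    | zero =>
      intro C hC _
      have : C = ∅ := Finset.card_eq_zero.mp (Nat.le_zero.mp hC)
      subst this
      exact ⟨∅, by simp [IsIT], by simp, by simp⟩
    | succ n ihn =>
      intro C hCcard hCparts
      rcases Finset.eq_empty_or_nonempty C with rfl | ⟨p, hp⟩
      · exact ⟨∅, by simp [IsIT], by simp, by simp⟩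
      have hC' : (C.erase p).card ≤ n := by
        have := Finset.card_erase_of_mem hp
        have := Finset.card_pos.mpr ⟨p, hp⟩
        omega
      obtain ⟨T, hT⟩ := ihn (C.erase p) hC' ((Finset.erase_subset _ _).trans hCparts)
      rcases engine H P.parts hdisj (C.erase p).card (C.erase p) le_rfl
          ((Finset.erase_subset _ _).trans hCparts) p (hCparts hp)
          (Finset.notMem_erase _ _) ∅ T hT (by intro x hx; simp at hx) with
        ⟨T', hT', _⟩ | ⟨K, D', T'', hpK, hKsub, _, _, hbud, _, hdomK, _, _⟩
      · rw [Finset.insert_erase hp] at hT'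
        exact ⟨T', hT'⟩
      · -- counting contradiction
        exfalso
        rw [Finset.insert_erase hp] at hKsub
        have hKparts : K ⊆ P.parts := hKsub.trans hCparts
        have hdomK' : ∀ c ∈ K, Dom H c D' := by
          intro c hc x hx
          obtain ⟨y, hy, hadj⟩ := hdomK c hc x hx
          refine ⟨y, ?_, hadj⟩
          rcases Finset.mem_union.mp hy with h | h
          · exact absurd h (Finset.notMem_empty y)
          · exact h
        -- the union of the classes of K
        have hcardU : K.card * (2 * H.maxDegree) ≤ (K.biUnion id).card := by
          have h1 : (K.biUnion id).card = ∑ c ∈ K, (id c).card :=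
            Finset.card_biUnion (fun a ha b hb hab =>
              hdisj a (hKparts ha) b (hKparts hb) hab)
          simp only [id_eq] at h1
          rw [h1]
          calc K.card * (2 * H.maxDegree) = ∑ _c ∈ K, (2 * H.maxDegree) := by
                rw [Finset.sum_const, smul_eq_mul]
            _ ≤ ∑ c ∈ K, c.card := Finset.sum_le_sum (fun c hc => hP c (hKparts hc))
        have hsubNb : K.biUnion id ⊆ Nb H D' := by
          intro x hx
          obtain ⟨c, hc, hxc⟩ := Finset.mem_biUnion.mp hx
          obtain ⟨y, hy, hadj⟩ := hdomK' c hc x hxc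
          exact (mem_Nb H).mpr ⟨y, hy, hadj.symm⟩
        have hcardNb : (Nb H D').card ≤ D'.card * H.maxDegree := by
          calc (Nb H D').card ≤ ∑ d ∈ D', (H.neighborFinset d).card := Finset.card_biUnion_le
            _ ≤ ∑ _d ∈ D', H.maxDegree := by
                refine Finset.sum_le_sum ?_
                intro d _
                exact H.degree_le_maxDegree d
            _ = D'.card * H.maxDegree := by rw [Finset.sum_const, smul_eq_mul]
        have hchain : K.card * (2 * H.maxDegree) ≤ D'.card * H.maxDegree :=
          le_trans hcardU (le_trans (Finset.card_le_card hsubNb) hcardNb)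
        -- deduce maxDegree = 0
        have hdeg0 : H.maxDegree = 0 := by
          by_contra hd
          have hd1 : 1 ≤ H.maxDegree := Nat.one_le_iff_ne_zero.mpr hd
          nlinarith [hbud, hchain]
        -- but p is nonempty and dominated
        obtain ⟨x, hx⟩ := P.nonempty_of_mem_parts (hCparts hp)
        obtain ⟨y, _, hadj⟩ := hdomK p hpK x hx
        have : 1 ≤ H.degree x := by
          rw [← SimpleGraph.card_neighborFinset_eq_degree]
          refine Finset.card_pos.mpr ⟨y, ?_⟩
          exact (SimpleGraph.mem_neighborFinset _ _ _).mpr hadj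
        have := H.degree_le_maxDegree x
        omega
  obtain ⟨T, hT⟩ := allIT P.parts.card P.parts le_rfl le_rfl
  choose a ha using fun (p : P.parts) => Finset.card_eq_one.mp (hT.2.1 _ p.2)
  have hmem : ∀ p : P.parts, a p ∈ T ∩ (p : Finset V) := by
    intro p
    rw [ha p]
    exact Finset.mem_singleton_self _
  refine ⟨a, ?_, ?_⟩
  · intro p
    exact (Finset.mem_inter.mp (hmem p)).2
  · intro p q hpq
    have hap : a p ∈ T := (Finset.mem_inter.mp (hmem p)).1
    have haq : a q ∈ T := (Finset.mem_inter.mp (hmem q)).1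
    have hpq' : (p : Finset V) ≠ (q : Finset V) := fun h => hpq (Subtype.ext h)
    have hne : a p ≠ a q := by
      intro h
      have h1 : a p ∈ (p : Finset V) := (Finset.mem_inter.mp (hmem p)).2
      have h2 : a p ∈ (q : Finset V) := h ▸ (Finset.mem_inter.mp (hmem q)).2
      exact Finset.disjoint_left.mp (hdisj p p.2 q q.2 hpq') h1 h2
    exact hT.2.2 hap haq hne
end

section
/- If G is a vertex-transitive graph with ω(G) > (2/3)(Δ(G)+1), then ω(G) divides |V(G)|. -/
open SimpleGraph Finset

/-- The independence number of `G`: the largest size of a set of pairwise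
nonadjacent vertices, i.e. the clique number of the complement. -/
noncomputable def indepNum {V : Type*} (G : SimpleGraph V) : ℕ := Gᶜ.cliqueNum

section Aux

open Finset

variable {V : Type*} [Fintype V] [DecidableEq V] (G : SimpleGraph V)

/-- The image of an `n`-clique under a graph automorphism is an `n`-clique. -/
lemma image_isNClique (e : G ≃g G) {n : ℕ} {K : Finset V}
    (h : G.IsNClique n K) : G.IsNClique n (K.image e) := by
  constructor
  · intro x hx y hy hxy
    simp only [coe_image, Set.mem_image, mem_coe] at hx hy
    obtain ⟨u, hu, rfl⟩ := hx
    obtain ⟨w, hw, rfl⟩ := hy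
    exact e.map_adj_iff.2 (h.1 hu hw (fun hh => hxy (by rw [hh])))
  · rw [Finset.card_image_of_injective _ e.injective, h.2]

/-- Hajnal's clique collection lemma: for a nonempty family of `ω`-cliques in a graph
whose cliques all have size at most `ω`, `|⋂F| + |⋃F| ≥ 2ω`. -/
lemma hajnal {ω : ℕ} (hmax : ∀ t : Finset V, G.IsClique t → t.card ≤ ω)
    (F : Finset (Finset V)) (hne : F.Nonempty)
    (hF : ∀ K ∈ F, G.IsNClique ω K) :
    2 * ω ≤ (F.inf' hne id).card + (F.sup id).card := by
  induction hne using Finset.Nonempty.cons_induction with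
  | singleton a =>
      simp only [inf'_singleton, sup_singleton, id]
      have := (hF a (mem_singleton_self a)).2
      omega
  | cons a s ha hs ih =>
      have hsub : ∀ K ∈ s, G.IsNClique ω K := fun K hK => hF K (mem_cons_of_mem hK)
      have IH := ih hsub
      set I := s.inf' hs id with hIdef
      set U := s.sup id with hUdef
      have haK : G.IsNClique ω a := hF a (mem_cons_self a s)
      have hIsub : ∀ K ∈ s, I ⊆ K := fun K hK => inf'_le id hK
      have hclq : G.IsClique ((a ∩ U) ∪ (I \ a) : Finset V) := by
        intro x hx y hy hxy
        simp only [coe_union, Set.mem_union, coe_inter, Set.mem_inter_iff, coe_sdiff,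
          Set.mem_diff, mem_coe] at hx hy
        rcases hx with ⟨hxa, hxU⟩ | ⟨hxI, hxna⟩ <;>
          rcases hy with ⟨hya, hyU⟩ | ⟨hyI, hyna⟩
        · exact haK.1 hxa hya hxy
        · rw [hUdef, mem_sup] at hxU
          obtain ⟨K, hK, hxK⟩ := hxU
          exact (hsub K hK).1 hxK (hIsub K hK hyI) hxy
        · rw [hUdef, mem_sup] at hyU
          obtain ⟨K, hK, hyK⟩ := hyU
          exact (hsub K hK).1 (hIsub K hK hxI) hyK hxy
        · obtain ⟨K, hK⟩ := hs
          exact (hsub K hK).1 (hIsub K hK hxI) (hIsub K hK hyI) hxy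
      have hcard := hmax _ hclq
      have e1 : ((a ∩ U) ∪ (I \ a)).card = (a ∩ U).card + (I \ a).card := by
        apply card_union_of_disjoint
        rw [Finset.disjoint_left]
        intro x hx hx'
        exact (mem_sdiff.1 hx').2 (mem_inter.1 hx).1
      have e2 : (a ∩ U).card + (a \ U).card = a.card := card_inter_add_card_sdiff a U
      have e3 : a.card = ω := haK.2
      have e4 : (I ∩ a).card + (I \ a).card = I.card := card_inter_add_card_sdiff I a
      have e5 : (a \ U).card + U.card = (a ∪ U).card := card_sdiff_add_card a U
      have goal_eq : (Finset.cons a s ha).inf' (cons_nonempty ha) id = a ∩ I := by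
        rw [inf'_cons]; rfl
      have goal_eq2 : (Finset.cons a s ha).sup id = a ∪ U := by
        rw [sup_cons]; rfl
      rw [goal_eq, goal_eq2]
      have e6 : (a ∩ I).card = (I ∩ a).card := by rw [inter_comm]
      omega

end Aux

/-- If `G` is vertex-transitive with `ω(G) > (2/3)(Δ(G)+1)`, then
`ω(G)` divides `|V(G)|`. -/
theorem transitive_cliqueNum_dvd {V : Type*} [Fintype V] [DecidableEq V]
    (G : SimpleGraph V) [DecidableRel G.Adj]
    (hvt : VertexTransitive G)
    (hω : 3 * G.cliqueNum > 2 * (G.maxDegree + 1)) :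
    G.cliqueNum ∣ Fintype.card V := by
  classical
  set ω := G.cliqueNum with hωdef
  have hmax : ∀ t : Finset V, G.IsClique t → t.card ≤ ω :=
    fun t ht => ht.card_le_cliqueNum
  -- maximum cliques
  set Max : Finset V → Prop := fun K => G.IsNClique ω K with hMaxdef
  obtain ⟨K₀, hK₀⟩ := G.exists_isNClique_cliqueNum
  have hω1 : 1 ≤ ω := by omega
  -- every nonempty intersection of a family of maximum cliques is large
  have hbig : ∀ (F : Finset (Finset V)) (hne : F.Nonempty),
      (∀ K ∈ F, Max K) → (F.inf' hne id).Nonempty →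
      ω + 1 ≤ 2 * (F.inf' hne id).card := by
    intro F hne hF ⟨v, hv⟩
    have hU : F.sup id ⊆ insert v (G.neighborFinset v) := by
      intro x hx
      rw [mem_sup] at hx
      obtain ⟨K, hK, hxK⟩ := hx
      by_cases hxv : x = v
      · simp [hxv]
      · have hvK : v ∈ K := (inf'_le id hK : F.inf' hne id ⊆ K) hv
        have : G.Adj v x := (hF K hK).1 hvK hxK (fun h => hxv h.symm)
        simp [SimpleGraph.mem_neighborFinset, this]
    have hUcard : (F.sup id).card ≤ G.maxDegree + 1 := by
      calc (F.sup id).card ≤ (insert v (G.neighborFinset v)).card := card_le_card hU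
        _ ≤ (G.neighborFinset v).card + 1 := card_insert_le _ _
        _ = G.degree v + 1 := by rw [G.card_neighborFinset_eq_degree]
        _ ≤ G.maxDegree + 1 := by have := G.degree_le_maxDegree v; omega
    have hhaj := hajnal G hmax F hne hF
    omega
  -- pick a minimal nonempty intersection of maximum cliques
  have hPdec : DecidablePred (fun D : Finset V =>
      ∃ (F : Finset (Finset V)) (hne : F.Nonempty),
        (∀ K ∈ F, Max K) ∧ F.inf' hne id = D ∧ D.Nonempty) := Classical.decPred _
  set S : Finset (Finset V) := Finset.univ.filter (fun D : Finset V =>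
      ∃ (F : Finset (Finset V)) (hne : F.Nonempty),
        (∀ K ∈ F, Max K) ∧ F.inf' hne id = D ∧ D.Nonempty) with hSdef
  have hSne : S.Nonempty := by
    refine ⟨K₀, ?_⟩
    rw [hSdef, mem_filter]
    refine ⟨mem_univ _, {K₀}, singleton_nonempty _, ?_, ?_, ?_⟩
    · intro K hK; rw [mem_singleton] at hK; rwa [hK]
    · simp
    · rw [← Finset.card_pos, hK₀.2]; omega
  obtain ⟨D, hDS, hDmin⟩ := S.exists_min_image Finset.card hSne
  rw [hSdef, mem_filter] at hDS
  obtain ⟨-, F, hFne, hFmax, hFinf, hDne⟩ := hDS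
  -- D is large
  have hDbig : ω + 1 ≤ 2 * D.card := by
    have := hbig F hFne hFmax (hFinf ▸ hDne)
    rwa [hFinf] at this
  -- absorption: any maximum clique meeting D contains D
  have habs : ∀ K : Finset V, Max K → (D ∩ K).Nonempty → D ⊆ K := by
    intro K hK hmeet
    by_cases hKF : K ∈ F
    · have : D ⊆ K := hFinf ▸ (inf'_le id hKF)
      exact this
    · have hne' : (Finset.cons K F hKF).Nonempty := cons_nonempty hKF
      have hinf' : (Finset.cons K F hKF).inf' hne' id = K ∩ D := by
        rw [inf'_cons (H := hFne), hFinf]; rfl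
      have hmem : (K ∩ D) ∈ S := by
        rw [hSdef, mem_filter]
        refine ⟨mem_univ _, Finset.cons K F hKF, hne', ?_, hinf', ?_⟩
        · intro L hL
          rw [Finset.mem_cons] at hL
          rcases hL with rfl | hL
          · exact hK
          · exact hFmax L hL
        · rwa [inter_comm] at hmeet
      have hle : D.card ≤ (K ∩ D).card := hDmin _ hmem
      have hsub : K ∩ D ⊆ D := inter_subset_right
      have : K ∩ D = D := Finset.eq_of_subset_of_card_le hsub hle
      intro x hx
      rw [← this] at hx
      exact (mem_inter.1 hx).1
  -- pairwise intersecting maximum cliques intersect in more than ω/2 vertices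
  have hpair : ∀ K L : Finset V, Max K → Max L → (K ∩ L).Nonempty →
      ω + 1 ≤ 2 * (K ∩ L).card := by
    intro K L hK hL hne
    by_cases hKL : K = L
    · subst hKL
      rw [inter_self]
      rw [hK.2]; omega
    · have hne2 : ({K, L} : Finset (Finset V)).Nonempty := by simp
      have hinf : ({K, L} : Finset (Finset V)).inf' hne2 id = K ∩ L := by
        ext x; simp [mem_inf']
      have := hbig {K, L} hne2 (by
        intro M hM
        simp only [mem_insert, mem_singleton] at hM
        rcases hM with rfl | rfl
        · exact hK
        · exact hL) (by rw [hinf]; exact hne)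
      rwa [hinf] at this
  -- vertices of D are central
  have hcentral : ∀ v ∈ D, ∀ K L : Finset V, Max K → Max L → v ∈ K →
      (K ∩ L).Nonempty → v ∈ L := by
    intro v hv K L hK hL hvK hKL
    have hDK : D ⊆ K := habs K hK ⟨v, mem_inter.2 ⟨hv, hvK⟩⟩
    -- D and K ∩ L are both large subsets of K, so they intersect
    have hKLsub : K ∩ L ⊆ K := inter_subset_left
    have hKcard : K.card = ω := hK.2
    have hDL : (D ∩ L).Nonempty := by
      by_contra hempty
      rw [Finset.not_nonempty_iff_eq_empty] at hempty
      have hdisj : Disjoint D (K ∩ L) := by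
        rw [Finset.disjoint_left]
        intro x hxD hxKL
        have : x ∈ D ∩ L := mem_inter.2 ⟨hxD, (mem_inter.1 hxKL).2⟩
        rw [hempty] at this
        exact absurd this (Finset.notMem_empty x)
      have hsum : D.card + (K ∩ L).card ≤ K.card := by
        have : D ∪ (K ∩ L) ⊆ K := Finset.union_subset hDK hKLsub
        calc D.card + (K ∩ L).card = (D ∪ (K ∩ L)).card :=
              (card_union_of_disjoint hdisj).symm
          _ ≤ K.card := card_le_card this
      have := hpair K L hK hL hKL
      omega
    exact habs L hL hDL hv
  -- every vertex is central, by vertex-transitivity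
  obtain ⟨v₀, hv₀⟩ := hDne
  have hallcentral : ∀ v : V, ∀ K L : Finset V, Max K → Max L → v ∈ K →
      (K ∩ L).Nonempty → v ∈ L := by
    intro v K L hK hL hvK hKL
    obtain ⟨e, he⟩ := hvt v v₀
    have hK' : Max (K.image e) := image_isNClique G e hK
    have hL' : Max (L.image e) := image_isNClique G e hL
    have hvK' : v₀ ∈ K.image e := he ▸ Finset.mem_image_of_mem e hvK
    have hKL' : ((K.image e) ∩ (L.image e)).Nonempty := by
      obtain ⟨x, hx⟩ := hKL
      exact ⟨e x, mem_inter.2 ⟨Finset.mem_image_of_mem e (mem_inter.1 hx).1,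
        Finset.mem_image_of_mem e (mem_inter.1 hx).2⟩⟩
    have hv₀L : v₀ ∈ L.image e := hcentral v₀ hv₀ _ _ hK' hL' hvK' hKL'
    rw [← he] at hv₀L
    obtain ⟨w, hwL, hwe⟩ := Finset.mem_image.1 hv₀L
    rwa [e.injective hwe] at hwL
  -- distinct maximum cliques are disjoint
  have hdisjoint : ∀ K L : Finset V, Max K → Max L → K ≠ L → Disjoint K L := by
    intro K L hK hL hne
    rw [Finset.disjoint_left]
    intro x hxK hxL
    apply hne
    apply Finset.eq_of_subset_of_card_le
    · intro u huK
      exact hallcentral u K L hK hL huK ⟨x, mem_inter.2 ⟨hxK, hxL⟩⟩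
    · rw [hK.2, hL.2]
  -- every vertex is in a maximum clique
  have hcover : ∀ v : V, ∃ K : Finset V, Max K ∧ v ∈ K := by
    intro v
    have hK₀ne : K₀.Nonempty := by rw [← Finset.card_pos, hK₀.2]; omega
    obtain ⟨u, hu⟩ := hK₀ne
    obtain ⟨e, he⟩ := hvt u v
    exact ⟨K₀.image e, image_isNClique G e hK₀, he ▸ Finset.mem_image_of_mem e hu⟩
  -- count
  set 𝒦 : Finset (Finset V) := Finset.univ.filter Max with h𝒦def
  have hcover' : (Finset.univ : Finset V) = 𝒦.biUnion id := by
    ext v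
    simp only [mem_univ, true_iff, Finset.mem_biUnion, h𝒦def, mem_filter, id]
    obtain ⟨K, hK, hvK⟩ := hcover v
    exact ⟨K, ⟨trivial, hK⟩, hvK⟩
  have hdisj' : ∀ K ∈ 𝒦, ∀ L ∈ 𝒦, K ≠ L → Disjoint (id K) (id L) := by
    intro K hK L hL hne
    rw [h𝒦def, mem_filter] at hK hL
    exact hdisjoint K L hK.2 hL.2 hne
  have hcount : Fintype.card V = 𝒦.card * ω := by
    rw [← Finset.card_univ, hcover', Finset.card_biUnion hdisj']
    have hc : ∀ K ∈ 𝒦, (id K).card = ω := by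
      intro K hK
      rw [h𝒦def, mem_filter] at hK
      exact hK.2.2
    calc ∑ K ∈ 𝒦, (id K).card = ∑ _K ∈ 𝒦, ω := Finset.sum_congr rfl hc
      _ = 𝒦.card * ω := by rw [Finset.sum_const, smul_eq_mul]
  rw [hcount]
  exact Dvd.intro 𝒦.card (Nat.mul_comm ω 𝒦.card)
end

section
/- For every finite graph G with at least one vertex, α(G) ≥ 2|V(G)| / (ω(G) + Δ(G) + 1). -/
open SimpleGraph Finset

/-!
Fix a maximum independent set `S`. Every vertex outside `S` has a neighbour in `S`. If two
vertices outside `S` both have `u` as their only neighbour in `S`, they are adjacent, since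
otherwise replacing `u` by both of them would enlarge `S`. Hence the vertices whose only neighbour
in `S` is `u` form, together with `u`, a clique, and there are at most `|S| (ω - 1)` vertices with
exactly one neighbour in `S`. Counting the edges between `S` and its complement,
`2 |V \ S| ≤ |S| (ω - 1) + |S| Δ`, that is `2 |V| ≤ |S| (ω + Δ + 1)`.
-/

namespace SimpleGraph

variable {V : Type*} {G : SimpleGraph V}

theorem IsIndepSet.insert_of_forall_not_adj {s : Set V} {a : V} (hs : G.IsIndepSet s)
    (h : ∀ b ∈ s, ¬G.Adj a b) : G.IsIndepSet (insert a s) :=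
  Set.Pairwise.insert hs fun b hb _ ↦ ⟨h b hb, fun hba ↦ h b hb hba.symm⟩

theorem sum_card_filter_adj_le_card_mul_maxDegree [Fintype V] [DecidableRel G.Adj]
    (s t : Finset V) :
    ∑ v ∈ t, #{x ∈ s | G.Adj v x} ≤ #s * G.maxDegree :=
  calc ∑ v ∈ t, #{x ∈ s | G.Adj v x} = ∑ u ∈ s, #{v ∈ t | G.Adj v u} :=
        sum_card_bipartiteAbove_eq_sum_card_bipartiteBelow G.Adj
    _ ≤ ∑ _u ∈ s, G.maxDegree := by
        refine sum_le_sum fun u _ ↦ (card_le_card fun v hv ↦ ?_).trans (G.degree_le_maxDegree u)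
        exact (G.mem_neighborFinset u v).mpr (mem_filter.mp hv).2.symm
    _ = #s * G.maxDegree := by rw [sum_const, smul_eq_mul]

section Maximum

variable [Fintype V] [DecidableEq V] {s : Finset V}

theorem IsMaximumIndepSet.exists_adj (hs : G.IsMaximumIndepSet s) {v : V} (hv : v ∉ s) :
    ∃ u ∈ s, G.Adj v u := by
  by_contra! h
  have hindep : G.IsIndepSet (insert v s : Finset V) := by
    rw [coe_insert]
    exact hs.isIndepSet.insert_of_forall_not_adj h
  have hcard := hs.maximum _ hindep
  rw [card_insert_of_notMem hv] at hcard
  omega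

theorem IsMaximumIndepSet.adj_of_forall_adj_eq (hs : G.IsMaximumIndepSet s) {u v w : V}
    (hu : u ∈ s) (hv : v ∉ s) (hw : w ∉ s) (hvw : v ≠ w)
    (hvu : ∀ x ∈ s, G.Adj v x → x = u) (hwu : ∀ x ∈ s, G.Adj w x → x = u) : G.Adj v w := by
  by_contra hnadj
  have hindep : G.IsIndepSet (insert v (insert w (s.erase u)) : Finset V) := by
    push_cast
    refine IsIndepSet.insert_of_forall_not_adj ?_ ?_
    · refine IsIndepSet.insert_of_forall_not_adj (hs.isIndepSet.mono (by simp)) fun x hx hwx ↦ ?_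
      simp only [Set.mem_sdiff, mem_coe, Set.mem_singleton_iff] at hx
      exact hx.2 (hwu x hx.1 hwx)
    · rintro x (rfl | hx) hvx
      · exact hnadj hvx
      · simp only [Set.mem_sdiff, mem_coe, Set.mem_singleton_iff] at hx
        exact hx.2 (hvu x hx.1 hvx)
  have hcard := hs.maximum _ hindep
  have hw' : w ∉ s.erase u := fun h ↦ hw (mem_of_mem_erase h)
  have hv' : v ∉ insert w (s.erase u) := by
    rw [mem_insert, not_or]
    exact ⟨hvw, fun h ↦ hv (mem_of_mem_erase h)⟩
  rw [card_insert_of_notMem hv', card_insert_of_notMem hw', card_erase_of_mem hu] at hcard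
  have : 0 < #s := card_pos.mpr ⟨u, hu⟩
  omega

variable [DecidableRel G.Adj]

def privateNeighborFinset (s : Finset V) (u : V) : Finset V :=
  {v ∈ sᶜ | {x ∈ s | G.Adj v x} = {u}}

theorem IsMaximumIndepSet.card_privateNeighborFinset_add_one_le_cliqueNum
    (hs : G.IsMaximumIndepSet s) {u : V} (hu : u ∈ s) :
    #(G.privateNeighborFinset s u) + 1 ≤ G.cliqueNum := by
  have hmem : ∀ v ∈ G.privateNeighborFinset s u,
      v ∉ s ∧ G.Adj v u ∧ ∀ x ∈ s, G.Adj v x → x = u := by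
    intro v hv
    simp only [privateNeighborFinset, mem_filter, mem_compl] at hv
    have hx : ∀ x, x ∈ s ∧ G.Adj v x ↔ x = u := fun x ↦ by
      rw [← mem_singleton, ← hv.2, mem_filter]
    exact ⟨hv.1, ((hx u).mpr rfl).2, fun x hxs hvx ↦ (hx x).mp ⟨hxs, hvx⟩⟩
  have hclique : G.IsClique (insert u (G.privateNeighborFinset s u) : Finset V) := by
    rw [coe_insert]
    refine IsClique.insert (fun v hv w hw hvw ↦ ?_) fun v hv _ ↦ (hmem v hv).2.1.symm
    obtain ⟨hvs, -, hvu⟩ := hmem v hv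
    obtain ⟨hws, -, hwu⟩ := hmem w hw
    exact hs.adj_of_forall_adj_eq hu hvs hws hvw hvu hwu
  have hu' : u ∉ G.privateNeighborFinset s u := fun h ↦ (hmem u h).1 hu
  simpa [card_insert_of_notMem hu'] using hclique.card_le_cliqueNum

theorem IsMaximumIndepSet.card_filter_card_eq_one_add_card_le (hs : G.IsMaximumIndepSet s) :
    #{v ∈ sᶜ | #{x ∈ s | G.Adj v x} = 1} + #s ≤ #s * G.cliqueNum := by
  have hsub : {v ∈ sᶜ | #{x ∈ s | G.Adj v x} = 1} ⊆ s.biUnion (G.privateNeighborFinset s) := by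
    intro v hv
    rw [mem_filter, card_eq_one] at hv
    obtain ⟨hvs, u, hu⟩ := hv
    have hus : u ∈ s := (mem_filter.mp (hu.symm ▸ mem_singleton_self u)).1
    exact mem_biUnion.mpr ⟨u, hus, mem_filter.mpr ⟨hvs, hu⟩⟩
  calc #{v ∈ sᶜ | #{x ∈ s | G.Adj v x} = 1} + #s
      ≤ ∑ u ∈ s, #(G.privateNeighborFinset s u) + #s := by
        gcongr
        exact (card_le_card hsub).trans card_biUnion_le
    _ = ∑ u ∈ s, (#(G.privateNeighborFinset s u) + 1) := by
        rw [sum_add_distrib, card_eq_sum_ones]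
    _ ≤ ∑ _u ∈ s, G.cliqueNum :=
        sum_le_sum fun u hu ↦ hs.card_privateNeighborFinset_add_one_le_cliqueNum hu
    _ = #s * G.cliqueNum := by rw [sum_const, smul_eq_mul]

theorem IsMaximumIndepSet.two_mul_card_compl_le (hs : G.IsMaximumIndepSet s) :
    2 * #sᶜ ≤ #{v ∈ sᶜ | #{x ∈ s | G.Adj v x} = 1} + ∑ v ∈ sᶜ, #{x ∈ s | G.Adj v x} := by
  rw [card_filter, ← sum_add_distrib, mul_comm, card_eq_sum_ones, sum_mul]
  refine sum_le_sum fun v hv ↦ ?_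
  obtain ⟨u, hu, hvu⟩ := hs.exists_adj (mem_compl.mp hv)
  have : 0 < #{x ∈ s | G.Adj v x} := card_pos.mpr ⟨u, mem_filter.mpr ⟨hu, hvu⟩⟩
  split_ifs <;> omega

theorem IsMaximumIndepSet.two_mul_card_le (hs : G.IsMaximumIndepSet s) :
    2 * Fintype.card V ≤ #s * (G.cliqueNum + G.maxDegree + 1) := by
  have hV := card_add_card_compl s
  have h₁ := hs.two_mul_card_compl_le
  have h₂ := hs.card_filter_card_eq_one_add_card_le
  have h₃ := sum_card_filter_adj_le_card_mul_maxDegree (G := G) s sᶜ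
  rw [mul_add, mul_add, mul_one]
  omega

end Maximum

end SimpleGraph

theorem fajtlowicz_general {V : Type*} [Fintype V]
    (G : SimpleGraph V) [DecidableRel G.Adj] :
    (_root_.indepNum G : ℚ) ≥
      2 * (Fintype.card V : ℚ) / ((G.cliqueNum : ℚ) + (G.maxDegree : ℚ) + 1) := by
  classical
  obtain ⟨s, hs⟩ := G.maximumIndepSet_exists
  have hα : _root_.indepNum G = #s := by
    rw [_root_.indepNum, cliqueNum_compl, maximumIndepSet_card_eq_indepNum s hs]
  rw [ge_iff_le, div_le_iff₀ (by positivity), hα]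
  exact_mod_cast hs.two_mul_card_le

/-- Fajtlowicz's bound: every graph satisfies `α(G) ≥ 2|V(G)| / (ω(G) + Δ(G) + 1)`. -/
theorem fajtlowicz {V : Type*} [Fintype V] [DecidableEq V] [Nonempty V]
    (G : SimpleGraph V) [DecidableRel G.Adj] :
    (_root_.indepNum G : ℚ) ≥
      2 * (Fintype.card V : ℚ) / ((G.cliqueNum : ℚ) + (G.maxDegree : ℚ) + 1) :=
  fajtlowicz_general G
end

section
/- Every vertex-transitive graph G with at least one vertex satisfies χ_f(G) = |V(G)| / α(G). -/
open SimpleGraph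

/-- The fractional chromatic number of a finite graph `G`: the infimum of `a / b`
over all `b`-fold colorings of `G` with `a` colors (each vertex gets a set of `b`
colors out of `a`, adjacent vertices receiving disjoint sets). -/
noncomputable def fracChromaticNumber {V : Type*} [Fintype V] (G : SimpleGraph V) : ℝ :=
  sInf {q : ℝ | ∃ a b : ℕ, 0 < b ∧ q = (a : ℝ) / (b : ℝ) ∧
    ∃ c : V → Finset (Fin a), (∀ v, (c v).card = b) ∧
      ∀ u v, G.Adj u v → Disjoint (c u) (c v)}


/-!
In a `b`-fold coloring with `a` colors every color class is independent, so double counting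
the incidences between vertices and colors gives `|V| * b ≤ a * α`, i.e. `|V| / α ≤ χ_f`.
For a vertex-transitive graph, fix a maximum independent set `S` and give `v` the colors
`{g ∈ Aut G | g v ∈ S}`. The color class of `g` is `g⁻¹ S`, of size `α`, and transitivity gives
every vertex the same number of colors, so the double count is an equality and `|V| / α` is
attained.
-/

open Finset

theorem indepNum_eq {V : Type*} (G : SimpleGraph V) : _root_.indepNum G = G.indepNum :=
  cliqueNum_compl

namespace SimpleGraph

variable {V ι : Type*} [Fintype V] [DecidableEq ι] {G : SimpleGraph V} {b : ℕ}

theorem indepNum_pos [Nonempty V] (G : SimpleGraph V) : 0 < G.indepNum := by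
  inhabit V
  have : G.IsIndepSet ({default} : Finset V) := by simp [isIndepSet_iff]
  exact Nat.lt_of_lt_of_le (by simp) this.card_le_indepNum

theorem isIndepSet_colorClass {c : V → Finset ι} (hdisj : ∀ u v, G.Adj u v → Disjoint (c u) (c v))
    (i : ι) : G.IsIndepSet ({v | i ∈ c v} : Finset V) := by
  intro u hu v hv _ hadj
  simp only [coe_filter, mem_univ, true_and, Set.mem_ofPred_eq] at hu hv
  exact Finset.disjoint_left.mp (hdisj u v hadj) hu hv

variable [Fintype ι]

omit [Fintype V] in
theorem card_bipartiteAbove_mem (c : V → Finset ι) (v : V) :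
    #((univ : Finset ι).bipartiteAbove (fun v i ↦ i ∈ c v) v) = #(c v) := by
  simp [bipartiteAbove]

theorem card_mul_le_card_mul_indepNum {c : V → Finset ι} (hc : ∀ v, #(c v) = b)
    (hdisj : ∀ u v, G.Adj u v → Disjoint (c u) (c v)) :
    Fintype.card V * b ≤ Fintype.card ι * G.indepNum := by
  simpa using card_mul_le_card_mul (fun v i ↦ i ∈ c v) (s := univ) (t := univ)
    (fun v _ ↦ (card_bipartiteAbove_mem c v).trans (hc v) |>.ge)
    (fun i _ ↦ (isIndepSet_colorClass hdisj i).card_le_indepNum)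

theorem card_mul_eq_card_mul_of_card_colorClass_eq {c : V → Finset ι} {m : ℕ}
    (hc : ∀ v, #(c v) = b) (hclass : ∀ i, #({v | i ∈ c v} : Finset V) = m) :
    Fintype.card V * b = Fintype.card ι * m := by
  simpa using card_mul_eq_card_mul (fun v i ↦ i ∈ c v) (s := univ) (t := univ)
    (fun v _ ↦ (card_bipartiteAbove_mem c v).trans (hc v)) (fun i _ ↦ hclass i)

end SimpleGraph

section FracChromaticNumber

variable {V ι : Type*} [Fintype ι] {G : SimpleGraph V} {b : ℕ}

-- `fracChromaticNumber G` is `sInf (multicoloringRatios G)` by definition.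
def multicoloringRatios (G : SimpleGraph V) : Set ℝ :=
  {q : ℝ | ∃ a b : ℕ, 0 < b ∧ q = (a : ℝ) / (b : ℝ) ∧
    ∃ c : V → Finset (Fin a), (∀ v, (c v).card = b) ∧
      ∀ u v, G.Adj u v → Disjoint (c u) (c v)}

theorem card_div_mem_multicoloringRatios {c : V → Finset ι} (hb : 0 < b) (hc : ∀ v, #(c v) = b)
    (hdisj : ∀ u v, G.Adj u v → Disjoint (c u) (c v)) :
    (Fintype.card ι / b : ℝ) ∈ multicoloringRatios G := by
  let e := (Fintype.equivFin ι).toEmbedding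
  refine ⟨_, b, hb, rfl, fun v ↦ (c v).map e, fun v ↦ by simp [hc], fun u v huv ↦ ?_⟩
  simpa [disjoint_map] using hdisj u v huv

variable [Fintype V]

theorem multicoloringRatios_nonempty (G : SimpleGraph V) : (multicoloringRatios G).Nonempty := by
  classical
  exact ⟨_, card_div_mem_multicoloringRatios (c := fun v ↦ {v}) one_pos (fun _ ↦ card_singleton _)
    fun u v huv ↦ disjoint_singleton.mpr huv.ne⟩

theorem fracChromaticNumber_le_card_div {c : V → Finset ι} (hb : 0 < b) (hc : ∀ v, #(c v) = b)
    (hdisj : ∀ u v, G.Adj u v → Disjoint (c u) (c v)) :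
    fracChromaticNumber G ≤ Fintype.card ι / b := by
  refine csInf_le ⟨0, ?_⟩ (card_div_mem_multicoloringRatios hb hc hdisj)
  rintro q ⟨a, b, -, rfl, -⟩
  positivity

theorem card_div_indepNum_le_fracChromaticNumber (G : SimpleGraph V) :
    Fintype.card V / _root_.indepNum G ≤ fracChromaticNumber G := by
  refine le_csInf (multicoloringRatios_nonempty G) ?_
  rintro q ⟨a, b, hb, rfl, c, hc, hdisj⟩
  have hle := card_mul_le_card_mul_indepNum hc hdisj
  rw [Fintype.card_fin, ← indepNum_eq] at hle
  rcases (_root_.indepNum G).eq_zero_or_pos with h0 | hpos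
  · rw [h0, Nat.cast_zero, div_zero]
    positivity
  · rw [div_le_div_iff₀ (by exact_mod_cast hpos) (by exact_mod_cast hb)]
    exact_mod_cast hle

theorem fracChromaticNumber_eq_card_div_indepNum [Nonempty V] [DecidableEq ι] {c : V → Finset ι}
    (hb : 0 < b) (hc : ∀ v, #(c v) = b) (hdisj : ∀ u v, G.Adj u v → Disjoint (c u) (c v))
    (hclass : ∀ i, #({v | i ∈ c v} : Finset V) = G.indepNum) :
    fracChromaticNumber G = Fintype.card V / _root_.indepNum G := by
  have hcount := card_mul_eq_card_mul_of_card_colorClass_eq hc hclass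
  have hα : (0 : ℝ) < G.indepNum := mod_cast G.indepNum_pos
  refine le_antisymm ?_ (card_div_indepNum_le_fracChromaticNumber G)
  calc fracChromaticNumber G ≤ Fintype.card ι / b := fracChromaticNumber_le_card_div hb hc hdisj
    _ = Fintype.card V / _root_.indepNum G := by
      rw [indepNum_eq, div_eq_div_iff (by positivity) hα.ne']
      exact_mod_cast hcount.symm

end FracChromaticNumber

namespace SimpleGraph

variable {V : Type*} {G : SimpleGraph V}

instance [Finite V] {W : Type*} {H : SimpleGraph W} : Finite (G ≃g H) :=
  Finite.of_injective _ RelIso.toEquiv_injective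

variable [DecidableEq V]

def automorphismColoring (G : SimpleGraph V) [Fintype (G ≃g G)] (S : Finset V) (v : V) :
    Finset (G ≃g G) :=
  {g | g v ∈ S}

variable [Fintype (G ≃g G)]

theorem disjoint_automorphismColoring {S : Finset V} (hS : G.IsIndepSet S) {u v : V}
    (huv : G.Adj u v) : Disjoint (automorphismColoring G S u) (automorphismColoring G S v) := by
  refine Finset.disjoint_left.mpr fun g hu hv ↦ ?_
  simp only [automorphismColoring, mem_filter, mem_univ, true_and] at hu hv
  exact hS hu hv (g.injective.ne huv.ne) (g.map_adj_iff.mpr huv)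

theorem card_colorClass_automorphismColoring [Fintype V] [DecidableEq (G ≃g G)] (S : Finset V)
    (g : G ≃g G) : #({v | g ∈ automorphismColoring G S v} : Finset V) = #S :=
  card_equiv g.toEquiv fun v ↦ by simp [automorphismColoring]

end SimpleGraph

namespace VertexTransitive

open SimpleGraph

variable {V : Type*} {G : SimpleGraph V} [Fintype (G ≃g G)] [DecidableEq V] (S : Finset V)

theorem card_automorphismColoring_eq (hvt : VertexTransitive G) (u v : V) :
    #(automorphismColoring G S u) = #(automorphismColoring G S v) := by
  obtain ⟨h, huv⟩ := hvt u v
  refine (card_equiv (Equiv.mulRight h) fun g ↦ ?_).symm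
  simp [automorphismColoring, RelIso.mul_apply, huv]

theorem automorphismColoring_nonempty (hvt : VertexTransitive G) (hS : S.Nonempty) (v : V) :
    (automorphismColoring G S v).Nonempty := by
  obtain ⟨s, hs⟩ := hS
  obtain ⟨g, hg⟩ := hvt v s
  exact ⟨g, by simpa [automorphismColoring, hg]⟩

end VertexTransitive

/-- Every vertex-transitive graph satisfies `χ_f(G) = |V(G)| / α(G)`. -/
theorem transitive_fracChromaticNumber_eq {V : Type*} [Fintype V] [Nonempty V]
    (G : SimpleGraph V) (hvt : VertexTransitive G) :
    fracChromaticNumber G = (Fintype.card V : ℝ) / (_root_.indepNum G : ℝ) := by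
  classical
  have := Fintype.ofFinite (G ≃g G)
  obtain ⟨S, hS⟩ := G.exists_isNIndepSet_indepNum
  have hS_nonempty : S.Nonempty := card_pos.mp (hS.card_eq ▸ G.indepNum_pos)
  let v₀ := Classical.arbitrary V
  exact fracChromaticNumber_eq_card_div_indepNum
    (card_pos.mpr (hvt.automorphismColoring_nonempty S hS_nonempty v₀))
    (fun v ↦ hvt.card_automorphismColoring_eq S v v₀)
    (fun _ _ ↦ disjoint_automorphismColoring hS.isIndepSet)
    (fun g ↦ (card_colorClass_automorphismColoring S g).trans hS.card_eq)
end

section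
/- For t ≥ 2 and k ≥ 1, let G_{t,k} be the line graph of the multigraph obtained from the odd cycle C_{2t+1} by replacing each edge with k parallel edges. Then χ(G_{t,k}) = 2k + ⌈k/t⌉, Δ(G_{t,k}) = 3k − 1, and ω(G_{t,k}) = 2k. -/
open SimpleGraph

/-- The blow-up of a graph `H` obtained by replacing each vertex with a copy of
`K_r`, joining all vertices of copies corresponding to adjacent vertices. -/
def blowup {α : Type*} (H : SimpleGraph α) (r : ℕ) : SimpleGraph (α × Fin r) where
  Adj x y := H.Adj x.1 y.1 ∨ (x.1 = y.1 ∧ x.2 ≠ y.2)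
  symm := by
    constructor
    rintro x y (h | ⟨h1, h2⟩)
    · exact Or.inl h.symm
    · exact Or.inr ⟨h1.symm, h2.symm⟩
  loopless := by constructor; rintro x (h | ⟨-, h2⟩); exacts [H.loopless.irrefl _ h, h2 rfl]

instance {α : Type*} [DecidableEq α] (H : SimpleGraph α) [DecidableRel H.Adj] (r : ℕ) :
    DecidableRel (blowup H r).Adj := fun _ _ => inferInstanceAs (Decidable (_ ∨ _))

/-- Catlin's graph `G_{t,k} = L(kC_{2t+1})`: the line graph of the odd cycle
`C_{2t+1}` with every edge given multiplicity `k`; equivalently, the blow-up of the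
cycle `C_{2t+1}` by `K_k`. -/
def catlin (t k : ℕ) : SimpleGraph (Fin (2 * t + 1) × Fin k) :=
  blowup (cycleGraph (2 * t + 1)) k

instance (t k : ℕ) : DecidableRel (catlin t k).Adj :=
  inferInstanceAs (DecidableRel (blowup (cycleGraph (2 * t + 1)) k).Adj)

/-!
`G_{t,k}` is the blow-up of `C_{2t+1}` by `K_k`: it is `(3k-1)`-regular, and its cliques project
to cliques of the cycle, which for `2t + 1 ≥ 5` are edges. An independent set meets each blob at
most once and projects to an independent set of `C_{2t+1}`, so it has at most `t` vertices; an
`n`-colouring therefore gives `(2t+1)k ≤ nt`, i.e. `n ≥ 2k + ⌈k/t⌉`. Conversely, with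
`m = 2k + ⌈k/t⌉` colours read in `ZMod m`, blob `i` receives the `k` consecutive colours starting
at `ik + min(i, t⌈k/t⌉ - k)`: consecutive blocks start `k` or `k + 1` apart, and the block of
blob `2t` ends exactly where the block of blob `0` starts.
-/

open Finset

theorem ZMod.val_sub_lt_of_add_natCast_eq {m r i j : ℕ} {a b : ZMod m} (hij : i ≤ j) (hj : j < r)
    (h : a + i = b + j) : (a - b).val < r := by
  have hsub : a - b = ((j - i : ℕ) : ZMod m) := by
    rw [Nat.cast_sub hij]
    linear_combination h
  rw [hsub, ZMod.val_natCast]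
  exact (Nat.mod_le _ _).trans_lt (by omega)

namespace SimpleGraph

theorem Colorable.card_le_mul_indepNum {V : Type*} [Fintype V] {G : SimpleGraph V} {n : ℕ}
    (h : G.Colorable n) : Fintype.card V ≤ n * G.indepNum := by
  classical
  obtain ⟨C⟩ := h
  calc Fintype.card V = ∑ c : Fin n, #{v | C v = c} :=
        card_eq_sum_card_fiberwise fun _ _ => mem_coe.2 (mem_univ _)
    _ ≤ ∑ _c : Fin n, G.indepNum := by
        refine sum_le_sum fun c _ => IsIndepSet.card_le_indepNum ?_
        intro x hx y hy _ hxy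
        simp only [coe_filter, mem_univ, true_and, Set.mem_ofPred_eq] at hx hy
        exact C.valid hxy (hx.trans hy.symm)
    _ = n * G.indepNum := by simp

section Blowup

variable {α : Type*} {H : SimpleGraph α} {r : ℕ}

@[simp]
theorem blowup_adj {x y : α × Fin r} :
    (blowup H r).Adj x y ↔ H.Adj x.1 y.1 ∨ x.1 = y.1 ∧ x.2 ≠ y.2 := Iff.rfl

theorem IsIndepSet.injOn_fst {s : Set (α × Fin r)} (hs : (blowup H r).IsIndepSet s) :
    s.InjOn Prod.fst := fun _ hx _ hy h1 =>
  by_contra fun hxy => hs hx hy hxy (.inr ⟨h1, fun h2 => hxy (Prod.ext h1 h2)⟩)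

theorem IsIndepSet.image_fst {s : Set (α × Fin r)} (hs : (blowup H r).IsIndepSet s) :
    H.IsIndepSet (Prod.fst '' s) := by
  rintro _ ⟨x, hx, rfl⟩ _ ⟨y, hy, rfl⟩ hne hadj
  exact hs hx hy (fun h => hne (congrArg Prod.fst h)) (.inl hadj)

theorem indepNum_blowup_le [Finite α] : (blowup H r).indepNum ≤ H.indepNum := by
  classical
  obtain ⟨s, hs⟩ := (blowup H r).exists_isNIndepSet_indepNum
  rw [← hs.card_eq, ← card_image_of_injOn hs.isIndepSet.injOn_fst]
  exact IsIndepSet.card_le_indepNum (by simpa using hs.isIndepSet.image_fst)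

theorem IsClique.image_fst {s : Set (α × Fin r)} (hs : (blowup H r).IsClique s) :
    H.IsClique (Prod.fst '' s) := by
  rintro _ ⟨x, hx, rfl⟩ _ ⟨y, hy, rfl⟩ hne
  exact (hs hx hy fun h => hne (congrArg Prod.fst h)).resolve_right fun h => hne h.1

theorem IsClique.prod_univ {s : Set α} (hs : H.IsClique s) :
    (blowup H r).IsClique (s ×ˢ Set.univ) := by
  rintro x ⟨hx, -⟩ y ⟨hy, -⟩ hxy
  by_cases h1 : x.1 = y.1
  · exact .inr ⟨h1, fun h2 => hxy (Prod.ext h1 h2)⟩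
  · exact .inl (hs hx hy h1)

theorem cliqueNum_blowup [Fintype α] : (blowup H r).cliqueNum = H.cliqueNum * r := by
  classical
  apply le_antisymm
  · obtain ⟨S, hS⟩ := (blowup H r).exists_isNClique_cliqueNum
    have hfst : H.IsClique (S.image Prod.fst : Set α) := by
      simpa using hS.isClique.image_fst
    calc (blowup H r).cliqueNum = #S := hS.card_eq.symm
      _ ≤ #(S.image Prod.fst ×ˢ univ) := card_le_card fun x hx =>
          mem_product.2 ⟨mem_image_of_mem _ hx, mem_univ _⟩
      _ ≤ H.cliqueNum * r := by
          rw [card_product, card_univ, Fintype.card_fin]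
          exact Nat.mul_le_mul_right r hfst.card_le_cliqueNum
  · obtain ⟨s, hs⟩ := H.exists_isNClique_cliqueNum
    have hprod := hs.isClique.prod_univ (r := r)
    rw [← coe_univ, ← coe_product] at hprod
    calc H.cliqueNum * r = #(s ×ˢ (univ : Finset (Fin r))) := by simp [hs.card_eq]
      _ ≤ (blowup H r).cliqueNum := hprod.card_le_cliqueNum

theorem isRegularOfDegree_blowup [Fintype α] [DecidableEq α] [DecidableRel H.Adj] {d : ℕ}
    (h : H.IsRegularOfDegree d) : (blowup H r).IsRegularOfDegree (d * r + (r - 1)) := by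
  intro x
  have hnbr : (blowup H r).neighborFinset x =
      (H.neighborFinset x.1 ×ˢ univ).disjUnion ({x.1} ×ˢ {x.2}ᶜ) (by
        rw [Finset.disjoint_left]
        rintro ⟨a, i⟩ h1 h2
        simp only [mem_product, mem_neighborFinset, mem_singleton] at h1 h2
        exact H.loopless.irrefl _ (h2.1 ▸ h1.1)) := by
    ext ⟨a, i⟩
    simp only [mem_neighborFinset, blowup_adj, mem_disjUnion, mem_product, mem_univ, and_true,
      mem_singleton, mem_compl]
    tauto
  rw [← card_neighborFinset_eq_degree, hnbr, card_disjUnion, card_product, card_product,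
    card_neighborFinset_eq_degree, h x.1, card_compl]
  simp

theorem blowup_colorable {m : ℕ} [NeZero m] (hrm : r ≤ m) (s : α → ZMod m)
    (hs : ∀ a b, H.Adj a b → r ≤ (s a - s b).val) : (blowup H r).Colorable m := by
  rw [← ZMod.card m]
  refine (Coloring.mk (fun x => s x.1 + x.2) ?_).colorable
  rintro ⟨a, i⟩ ⟨b, j⟩ (hab | ⟨rfl, hij⟩) heq
  · rcases le_total (i : ℕ) j with hle | hle
    · exact (hs a b hab).not_gt (ZMod.val_sub_lt_of_add_natCast_eq hle j.2 heq)
    · exact (hs b a hab.symm).not_gt (ZMod.val_sub_lt_of_add_natCast_eq hle i.2 heq.symm)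
  · apply hij
    ext
    have := (ZMod.natCast_eq_natCast_iff' _ _ _).1 (add_left_cancel heq)
    rwa [Nat.mod_eq_of_lt (i.2.trans_le hrm), Nat.mod_eq_of_lt (j.2.trans_le hrm)] at this

end Blowup

section Cycle

variable {n : ℕ}

theorem cycleGraph_adj_iff_eq_add_one (hn : 1 ≤ n) {u v : Fin (n + 1)} :
    (cycleGraph (n + 1)).Adj u v ↔ u = v + 1 ∨ v = u + 1 := by
  obtain ⟨n, rfl⟩ := Nat.exists_eq_add_of_le' hn
  exact cycleGraph_adj.trans <| by
    rw [sub_eq_iff_eq_add', sub_eq_iff_eq_add', add_comm v, add_comm u]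

theorem two_mul_indepNum_cycleGraph_le (hn : 1 ≤ n) :
    2 * (cycleGraph (n + 1)).indepNum ≤ n + 1 := by
  classical
  obtain ⟨s, hs⟩ := (cycleGraph (n + 1)).exists_isNIndepSet_indepNum
  have hshift : #s ≤ #sᶜ := by
    refine card_le_card_of_injOn (· + 1) (fun a ha => mem_compl.2 fun ha' => ?_)
      (add_left_injective 1).injOn
    have hadj := (cycleGraph_adj_iff_eq_add_one hn (u := a) (v := a + 1)).2 (.inr rfl)
    exact hs.isIndepSet ha ha' hadj.ne hadj
  rw [card_compl, Fintype.card_fin] at hshift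
  rw [← hs.card_eq]
  omega

theorem cliqueNum_cycleGraph (hn : 3 ≤ n) : (cycleGraph (n + 1)).cliqueNum = 2 := by
  apply le_antisymm
  · obtain ⟨s, hs⟩ := (cycleGraph (n + 1)).exists_isNClique_cliqueNum
    by_contra! h
    obtain ⟨a, ha, b, hb, c, hc, hab, hac, hbc⟩ := two_lt_card.1 (hs.card_eq ▸ h)
    have adj : ∀ x ∈ s, ∀ y ∈ s, x ≠ y → x = y + 1 ∨ y = x + 1 := fun x hx y hy hxy =>
      (cycleGraph_adj_iff_eq_add_one (by omega)).1 (hs.isClique hx hy hxy)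
    have h1 := adj a ha b hb hab
    have h2 := adj a ha c hc hac
    have h3 := adj b hb c hc hbc
    simp only [Fin.ext_iff, Fin.val_add_one, Fin.val_last] at h1 h2 h3 hab hac hbc
    split_ifs at h1 h2 h3 <;> omega
  · have hclique : (cycleGraph (n + 1)).IsClique ({0, 1} : Finset (Fin (n + 1))) := by
      rw [coe_pair, isClique_pair]
      exact fun _ => (cycleGraph_adj_iff_eq_add_one (by omega)).2 (.inr (zero_add 1).symm)
    calc 2 = #({0, 1} : Finset (Fin (n + 1))) := by
          rw [card_pair]
          simp [Fin.ext_iff]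
          omega
      _ ≤ _ := hclique.card_le_cliqueNum

theorem cycleGraph_isRegularOfDegree (hn : 2 ≤ n) :
    (cycleGraph (n + 1)).IsRegularOfDegree 2 := by
  obtain ⟨n, rfl⟩ := Nat.exists_eq_add_of_le' hn
  exact fun _ => cycleGraph_degree_three_le

end Cycle

section Catlin

variable {t k : ℕ}

def cycleOffset (k E i : ℕ) : ℕ := i * k + min i E

theorem exists_cycleOffset_succ {q : ℕ} (hkq : k ≤ t * q) (hqk : t * q < k + t)
    (i : Fin (2 * t + 1)) : ∃ d, k ≤ d ∧ d + k ≤ 2 * k + q ∧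
      (cycleOffset k (t * q - k) ↑(i + 1) : ZMod (2 * k + q)) =
        cycleOffset k (t * q - k) i + d := by
  by_cases hi : i = Fin.last (2 * t)
  · refine ⟨k, le_rfl, by omega, ?_⟩
    have hwrap : cycleOffset k (t * q - k) (2 * t) + k = t * (2 * k + q) := by
      unfold cycleOffset
      rw [min_eq_right (by omega)]
      zify [hkq]
      ring
    rw [hi, Fin.last_add_one, Fin.val_zero, Fin.val_last, ← Nat.cast_add, hwrap, Nat.cast_mul,
      ZMod.natCast_self, mul_zero, cycleOffset]
    simp
  · have hsucc : ((i + 1 : Fin _) : ℕ) = i + 1 :=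
      Fin.val_add_one_of_lt (lt_of_le_of_ne (Fin.le_last i) hi)
    have hq : t * q - k = 0 ∨ 1 ≤ q := (Nat.eq_zero_or_pos q).imp (fun h => by simp [h]) id
    refine ⟨k + (min ((i : ℕ) + 1) (t * q - k) - min (i : ℕ) (t * q - k)), by omega, by omega, ?_⟩
    rw [hsucc, ← Nat.cast_add]
    congr 1
    unfold cycleOffset
    rw [add_mul, one_mul]
    omega

theorem catlin_colorable (ht : 1 ≤ t) (hk : 1 ≤ k) :
    (catlin t k).Colorable (2 * k + (k + t - 1) / t) := by
  have hkq : k ≤ t * ((k + t - 1) / t) := by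
    have := Nat.lt_mul_div_succ (k + t - 1) (by omega : 0 < t)
    rw [mul_add, mul_one] at this
    omega
  have hqk : t * ((k + t - 1) / t) < k + t := by
    have := Nat.mul_div_le (k + t - 1) t
    omega
  generalize (k + t - 1) / t = q at hkq hqk ⊢
  have : NeZero (2 * k + q) := NeZero.of_pos (by omega)
  refine blowup_colorable (by omega) (fun i => (cycleOffset k (t * q - k) i : ZMod _)) ?_
  intro a b hab
  rcases (cycleGraph_adj_iff_eq_add_one (by omega)).1 hab with rfl | rfl
  · obtain ⟨d, hkd, hdk, hd⟩ := exists_cycleOffset_succ hkq hqk b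
    rw [hd, add_sub_cancel_left, ZMod.val_natCast_of_lt (by omega)]
    exact hkd
  · obtain ⟨d, hkd, hdk, hd⟩ := exists_cycleOffset_succ hkq hqk a
    have hdm : d < 2 * k + q := by omega
    rw [hd, sub_add_cancel_left, ZMod.neg_val, if_neg, ZMod.val_natCast_of_lt hdm]
    · omega
    · rw [← ZMod.val_eq_zero, ZMod.val_natCast_of_lt hdm]
      omega

theorem catlin_indepNum_le (ht : 1 ≤ t) : (catlin t k).indepNum ≤ t := by
  have := two_mul_indepNum_cycleGraph_le (n := 2 * t) (by omega)
  exact indepNum_blowup_le.trans (by omega)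

theorem le_of_catlin_colorable (ht : 1 ≤ t) {n : ℕ} (h : (catlin t k).Colorable n) :
    2 * k + (k + t - 1) / t ≤ n := by
  have hcard : (2 * t + 1) * k ≤ n * t :=
    calc (2 * t + 1) * k = Fintype.card (Fin (2 * t + 1) × Fin k) := by simp
      _ ≤ n * (catlin t k).indepNum := h.card_le_mul_indepNum
      _ ≤ n * t := Nat.mul_le_mul_left n (catlin_indepNum_le ht)
  have h2k : 2 * k ≤ n := by
    by_contra! h
    have := Nat.mul_le_mul_right t (Nat.succ_le_of_lt h)
    nlinarith
  obtain ⟨p, rfl⟩ := Nat.exists_eq_add_of_le h2k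
  have hkp : k ≤ p * t := by nlinarith
  have hdiv : (k + t - 1) / t < p + 1 := by
    rw [Nat.div_lt_iff_lt_mul (by omega), add_mul, one_mul]
    omega
  omega

theorem catlin_chromaticNumber (ht : 1 ≤ t) (hk : 1 ≤ k) :
    (catlin t k).chromaticNumber = (2 * k + (k + t - 1) / t : ℕ) :=
  le_antisymm (catlin_colorable ht hk).chromaticNumber_le
    (le_chromaticNumber_iff_colorable.2 fun _ hn => Nat.cast_le.2 (le_of_catlin_colorable ht hn))

theorem catlin_isRegularOfDegree (ht : 1 ≤ t) : (catlin t k).IsRegularOfDegree (3 * k - 1) := by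
  have := isRegularOfDegree_blowup (r := k) (cycleGraph_isRegularOfDegree (n := 2 * t) (by omega))
  rwa [show 2 * k + (k - 1) = 3 * k - 1 by omega] at this

theorem catlin_cliqueNum (ht : 2 ≤ t) : (catlin t k).cliqueNum = 2 * k := by
  rw [catlin, cliqueNum_blowup, cliqueNum_cycleGraph (by omega)]

end Catlin

end SimpleGraph

/-- For `t ≥ 2` and `k ≥ 1`, Catlin's graph satisfies `χ = 2k + ⌈k/t⌉`,
`Δ = 3k − 1` and `ω = 2k`. -/
theorem catlin_graph_invariants (t k : ℕ) (ht : 2 ≤ t) (hk : 1 ≤ k) :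
    (catlin t k).chromaticNumber = ((2 * k + (k + t - 1) / t : ℕ) : ℕ∞) ∧
    (catlin t k).maxDegree = 3 * k - 1 ∧
    (catlin t k).cliqueNum = 2 * k := by
  have : Nonempty (Fin (2 * t + 1) × Fin k) := ⟨(0, ⟨0, hk⟩)⟩
  exact ⟨catlin_chromaticNumber (by omega) hk, (catlin_isRegularOfDegree (by omega)).maxDegree_eq,
    catlin_cliqueNum ht⟩
end

section
/- For every c ≥ 2 and every D, there exists a claw-free graph H with Δ(H) ≥ D and χ(H) > max{ω(H), Δ(H) − c}. In particular, for t ≥ 3, the join H_t of K_t with a 5-cycle satisfies χ(H_t) = t + 3, ω(H_t) = t + 2, and Δ(H_t) = t + 4. -/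
open SimpleGraph

/-- The maximum degree of a finite graph (using classical decidability). -/
noncomputable def maxDeg {V : Type*} [Fintype V] (G : SimpleGraph V) : ℕ :=
  @SimpleGraph.maxDegree V G _ (Classical.decRel _)

/-- A graph is claw-free if it has no induced `K_{1,3}`: there is no vertex `v` with
three pairwise distinct, pairwise nonadjacent neighbors. -/
def ClawFree {V : Type*} (G : SimpleGraph V) : Prop :=
  ¬ ∃ v a b c : V, a ≠ b ∧ a ≠ c ∧ b ≠ c ∧
    G.Adj v a ∧ G.Adj v b ∧ G.Adj v c ∧ ¬ G.Adj a b ∧ ¬ G.Adj a c ∧ ¬ G.Adj b c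

/-- The join `H_t` of the complete graph `K_t` with a `5`-cycle: every vertex of
`K_t` is adjacent to every vertex of `C_5`. -/
def joinKC5 (t : ℕ) : SimpleGraph (Fin t ⊕ Fin 5) where
  Adj x y :=
    match x, y with
    | Sum.inl a, Sum.inl b => a ≠ b
    | Sum.inl _, Sum.inr _ => True
    | Sum.inr _, Sum.inl _ => True
    | Sum.inr a, Sum.inr b => (cycleGraph 5).Adj a b
  symm := by
    constructor
    rintro (a | a) (b | b) h
    · exact Ne.symm h
    · trivial
    · trivial
    · exact (cycleGraph 5).adj_symm h
  loopless := by
    constructor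
    rintro (a | a) h
    · exact h rfl
    · exact (cycleGraph 5).irrefl h

/-!
Two distinct non-adjacent vertices of `H_t` both lie on the `C_5`, which has no three pairwise
non-adjacent vertices; hence `H_t` is claw-free. A proper colouring of `H_t` uses `t` distinct
colours on `K_t`, none of which may appear on the odd cycle, so `χ(H_t) = t + χ(C_5) = t + 3`.
A clique meets `C_5` in at most an edge, so `ω(H_t) = t + 2`, and a vertex of `K_t` is adjacent
to all `t + 4` other vertices. Relabelling `H_t` for `t > D` on `Fin (t + 5)` gives the example:
for `c ≥ 2`, `Δ - c ≤ t + 2 = ω < χ`.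
-/

open Finset

section Invariants

variable {V W : Type*} {G : SimpleGraph V} {H : SimpleGraph W}

lemma ClawFree.of_embedding (f : G ↪g H) (hH : ClawFree H) : ClawFree G := by
  rintro ⟨v, a, b, c, hab, hac, hbc, hva, hvb, hvc, hnab, hnac, hnbc⟩
  exact hH ⟨f v, f a, f b, f c, f.injective.ne hab, f.injective.ne hac, f.injective.ne hbc,
    f.map_adj_iff.2 hva, f.map_adj_iff.2 hvb, f.map_adj_iff.2 hvc,
    mt f.map_adj_iff.1 hnab, mt f.map_adj_iff.1 hnac, mt f.map_adj_iff.1 hnbc⟩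

lemma cliqueNum_le_of_embedding [Finite W] (f : G ↪g H) : G.cliqueNum ≤ H.cliqueNum := by
  obtain ⟨s, hs⟩ := G.exists_isNClique_cliqueNum
  have hclique : H.IsClique (s.map f.toEmbedding : Set W) := by
    rintro _ hx _ hy hxy
    simp only [coe_map, Set.mem_image, mem_coe] at hx hy
    obtain ⟨x, hx, rfl⟩ := hx
    obtain ⟨y, hy, rfl⟩ := hy
    exact f.map_adj_iff.2 (hs.isClique hx hy (ne_of_apply_ne _ hxy))
  calc G.cliqueNum = #(s.map f.toEmbedding) := by rw [card_map, hs.card_eq]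
    _ ≤ H.cliqueNum := hclique.card_le_cliqueNum

lemma SimpleGraph.Iso.cliqueNum_eq [Finite V] [Finite W] (f : G ≃g H) :
    G.cliqueNum = H.cliqueNum :=
  le_antisymm (cliqueNum_le_of_embedding f.toEmbedding)
    (cliqueNum_le_of_embedding f.symm.toEmbedding)

lemma maxDeg_eq_maxDegree [Fintype V] [DecidableRel G.Adj] : maxDeg G = G.maxDegree := by
  unfold maxDeg
  congr

lemma SimpleGraph.Iso.maxDeg_eq [Fintype V] [Fintype W] (f : G ≃g H) : maxDeg G = maxDeg H := by
  classical
  rw [maxDeg_eq_maxDegree, maxDeg_eq_maxDegree, f.maxDegree_eq]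

lemma maxDegree_eq_card_sub_one_of_isUniversal [Fintype V] [DecidableRel G.Adj] {v : V}
    (hv : G.IsUniversal v) : G.maxDegree = Fintype.card V - 1 := by
  refine le_antisymm (maxDegree_le_of_forall_degree_le _ _ fun w => ?_) ?_
  · have := G.degree_lt_card_verts w
    omega
  · exact (G.degree_eq_card_sub_one v).2 hv ▸ G.degree_le_maxDegree v

end Invariants

lemma cycleGraph_five_isClique_card_le {s : Finset (Fin 5)}
    (hs : (cycleGraph 5).IsClique (s : Set (Fin 5))) : #s ≤ 2 := by
  revert s
  decide

lemma cycleGraph_five_not_three_pairwise_nonadj :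
    ¬ ∃ a b c : Fin 5, a ≠ b ∧ a ≠ c ∧ b ≠ c ∧
      ¬ (cycleGraph 5).Adj a b ∧ ¬ (cycleGraph 5).Adj a c ∧ ¬ (cycleGraph 5).Adj b c := by
  decide

namespace joinKC5

variable {t : ℕ}

@[simp] lemma adj_inl_inl {a b : Fin t} : (joinKC5 t).Adj (.inl a) (.inl b) ↔ a ≠ b := Iff.rfl

@[simp] lemma adj_inl_inr {a : Fin t} {b : Fin 5} : (joinKC5 t).Adj (.inl a) (.inr b) := trivial

@[simp] lemma adj_inr_inl {a : Fin 5} {b : Fin t} : (joinKC5 t).Adj (.inr a) (.inl b) := trivial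

@[simp] lemma adj_inr_inr {a b : Fin 5} :
    (joinKC5 t).Adj (.inr a) (.inr b) ↔ (cycleGraph 5).Adj a b := Iff.rfl

lemma exists_inr_of_not_adj {x y : Fin t ⊕ Fin 5} (hne : x ≠ y) (hxy : ¬ (joinKC5 t).Adj x y) :
    ∃ a b : Fin 5, x = .inr a ∧ y = .inr b := by
  rcases x with x | x <;> rcases y with y | y
  · exact absurd (adj_inl_inl.2 fun h => hne (congrArg _ h)) hxy
  · exact absurd adj_inl_inr hxy
  · exact absurd adj_inr_inl hxy
  · exact ⟨x, y, rfl, rfl⟩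

lemma clawFree (t : ℕ) : ClawFree (joinKC5 t) := by
  rintro ⟨-, a, b, c, hab, hac, hbc, -, -, -, hnab, hnac, hnbc⟩
  obtain ⟨a, b, rfl, rfl⟩ := exists_inr_of_not_adj hab hnab
  obtain ⟨-, c, -, rfl⟩ := exists_inr_of_not_adj hac hnac
  exact cycleGraph_five_not_three_pairwise_nonadj ⟨a, b, c, fun h => hab (congrArg _ h),
    fun h => hac (congrArg _ h), fun h => hbc (congrArg _ h), hnab, hnac, hnbc⟩

lemma colorable (t : ℕ) : (joinKC5 t).Colorable (t + 3) := by
  let C : (joinKC5 t).Coloring (Fin t ⊕ Fin 3) :=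
    Coloring.mk (Sum.map id (cycleGraph.tricoloring 5 (by norm_num))) <| by
      rintro (a | a) (b | b) h
      · simpa using h
      · simp
      · simp
      · simpa using (cycleGraph.tricoloring 5 _).valid h
  simpa using C.colorable

lemma not_colorable (t : ℕ) : ¬ (joinKC5 t).Colorable (t + 2) := by
  rintro ⟨C⟩
  set S : Finset (Fin (t + 2)) := univ.image fun a => C (.inl a)
  have hS : #S = t := by
    rw [card_image_of_injective _ fun a b h => by_contra fun hab => C.valid (adj_inl_inl.2 hab) h]
    simp
  have hC5 : (cycleGraph 5).Colorable #Sᶜ := by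
    have hmem (b : Fin 5) : C (.inr b) ∈ Sᶜ := by
      simp only [S, mem_compl, mem_image, mem_univ, true_and, not_exists]
      exact fun a => C.valid adj_inl_inr
    simpa only [Fintype.card_coe] using
      (Coloring.mk (fun b => (⟨C (.inr b), hmem b⟩ : (Sᶜ : Finset _)))
        fun h heq => C.valid (adj_inr_inr.2 h) (congrArg Subtype.val heq)).colorable
  have h3 := hC5.chromaticNumber_le
  rw [chromaticNumber_cycleGraph_of_odd 5 (by norm_num) (by decide), card_compl, hS] at h3
  norm_num at h3

lemma chromaticNumber (t : ℕ) : (joinKC5 t).chromaticNumber = ((t + 3 : ℕ) : ℕ∞) := by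
  rw [show t + 3 = (t + 2) + 1 from rfl, Nat.cast_succ,
    chromaticNumber_eq_iff_colorable_not_colorable]
  exact ⟨colorable t, not_colorable t⟩

lemma cliqueNum (t : ℕ) : (joinKC5 t).cliqueNum = t + 2 := by
  refine le_antisymm ?_ ?_
  · obtain ⟨s, hs⟩ := (joinKC5 t).exists_isNClique_cliqueNum
    have hright : (cycleGraph 5).IsClique (s.toRight : Set (Fin 5)) :=
      fun a ha b hb hab => adj_inr_inr.1 (hs.isClique (mem_toRight.1 ha) (mem_toRight.1 hb)
        fun h => hab (Sum.inr_injective h))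
    calc (joinKC5 t).cliqueNum = #s.toLeft + #s.toRight := by
          rw [card_toLeft_add_card_toRight, hs.card_eq]
      _ ≤ t + 2 := add_le_add ((card_le_univ _).trans (by simp))
          (cycleGraph_five_isClique_card_le hright)
  · have hclique : (joinKC5 t).IsClique
        ((univ.disjSum ({0, 1} : Finset (Fin 5)) : Finset (Fin t ⊕ Fin 5)) : Set _) := by
      rintro (a | a) ha (b | b) hb hab
      · exact adj_inl_inl.2 fun h => hab (congrArg _ h)
      · exact adj_inl_inr
      · exact adj_inr_inl
      · have h01 : (cycleGraph 5).IsClique (({0, 1} : Finset (Fin 5)) : Set (Fin 5)) := by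
          rw [coe_pair]
          exact isClique_pair.2 fun _ => by decide
        rw [mem_coe, inr_mem_disjSum] at ha hb
        exact adj_inr_inr.2 (h01 ha hb fun h => hab (congrArg _ h))
    simpa [card_disjSum] using hclique.card_le_cliqueNum

lemma isUniversal_inl (a : Fin t) : (joinKC5 t).IsUniversal (.inl a) := by
  rintro (b | b) hab
  · exact adj_inl_inl.2 fun h => hab (congrArg _ h)
  · exact adj_inl_inr

lemma maxDeg (ht : 0 < t) : maxDeg (joinKC5 t) = t + 4 := by
  classical
  rw [maxDeg_eq_maxDegree, maxDegree_eq_card_sub_one_of_isUniversal (isUniversal_inl ⟨0, ht⟩)]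
  simp

end joinKC5

/-- For every `c ≥ 2` and `D` there is a claw-free graph `H` with `Δ(H) ≥ D` and
`χ(H) > max{ω(H), Δ(H) − c}`.  In particular, for `t ≥ 3` the join `H_t` of `K_t`
with a `5`-cycle satisfies `χ(H_t) = t + 3`, `ω(H_t) = t + 2` and `Δ(H_t) = t + 4`. -/
theorem claw_free_counterexamples :
    (∀ c : ℕ, 2 ≤ c → ∀ D : ℕ, ∃ (n : ℕ) (H : SimpleGraph (Fin n)),
      ClawFree H ∧ D ≤ maxDeg H ∧
        ((max H.cliqueNum (maxDeg H - c) : ℕ) : ℕ∞) < H.chromaticNumber) ∧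
    (∀ t : ℕ, 3 ≤ t →
      (joinKC5 t).chromaticNumber = ((t + 3 : ℕ) : ℕ∞) ∧
      (joinKC5 t).cliqueNum = t + 2 ∧
      maxDeg (joinKC5 t) = t + 4) := by
  refine ⟨fun c hc D => ?_, fun t ht =>
    ⟨joinKC5.chromaticNumber t, joinKC5.cliqueNum t, joinKC5.maxDeg (by omega)⟩⟩
  let e := (joinKC5 (D + 1)).overFinIso (n := D + 1 + 5) (by simp)
  refine ⟨D + 1 + 5, _, (joinKC5.clawFree _).of_embedding e.symm.toEmbedding, ?_, ?_⟩
  · rw [← e.maxDeg_eq, joinKC5.maxDeg D.succ_pos]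
    omega
  · rw [← e.maxDeg_eq, ← e.cliqueNum_eq, ← chromaticNumber_congr e, joinKC5.maxDeg D.succ_pos,
      joinKC5.cliqueNum, joinKC5.chromaticNumber, Nat.cast_lt]
    omega
end
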